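/- arXiv:2501.09581 — 2 statements merged into one kernel-verified Lean document; each statement's English description precedes it below -/
import Mathlib

section
/- Let K be a closed homogeneous cone of rank r (arising from a T-algebra of rank r). The length of the longest chain of faces F₁ ⊊ F₂ ⊊ ⋯ ⊊ F_ℓ of K equals r + 1. -/
/-- A T-algebra of rank `r` in the sense of Vinberg: a bigraded algebra
`A = ⊕_{i,j} A_{ij}` with involution `conj`, satisfying axioms (a1)–(a7).
`c a i j` denotes the `(i,j)` component of `a`, `e i` the unit of `A_{ii} ≅ ℝ`, and
`ρ i a` the real coordinate of the `(i,i)` component of `a`; the trace is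
`tr a = ∑ i, ρ i a` and the inner product is `⟨a,b⟩ = tr (a b*)`. -/
structure TAlgebra (A : Type*) [AddCommGroup A] [Module ℝ A] (r : ℕ) where
  mul : A →ₗ[ℝ] A →ₗ[ℝ] A
  conj : A →ₗ[ℝ] A
  S : Fin r → Fin r → Submodule ℝ A
  c : A → Fin r → Fin r → A
  e : Fin r → A
  ρ : Fin r → A → ℝ
  -- the bigradation
  c_mem : ∀ a i j, c a i j ∈ S i j
  c_sum : ∀ a, (∑ i, ∑ j, c a i j) = a
  c_unique : ∀ (a : A) (f : Fin r → Fin r → A), (∀ i j, f i j ∈ S i j) →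
    (∑ i, ∑ j, f i j) = a → ∀ i j, c a i j = f i j
  grade_mul : ∀ i j k : Fin r, ∀ x ∈ S i j, ∀ y ∈ S j k, mul x y ∈ S i k
  grade_mul_zero : ∀ i j k l : Fin r, j ≠ k → ∀ x ∈ S i j, ∀ y ∈ S k l, mul x y = 0
  -- the involution
  conj_conj : ∀ a, conj (conj a) = a
  conj_mul : ∀ a b, conj (mul a b) = mul (conj b) (conj a)
  conj_grade : ∀ i j : Fin r, ∀ x ∈ S i j, conj x ∈ S j i
  -- (a1): each `A_{ii}` is a subalgebra isomorphic to `ℝ`, with unit `e i`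
  e_mem : ∀ i, e i ∈ S i i
  conj_e : ∀ i, conj (e i) = e i
  e_ne : ∀ i, e i ≠ 0
  diag_coord : ∀ a i, c a i i = ρ i a • e i
  ρ_e : ∀ i, ρ i (e i) = 1
  e_idem : ∀ i, mul (e i) (e i) = e i
  -- (a2)
  e_mul : ∀ a (i j : Fin r), mul (e i) (c a i j) = c a i j
  mul_e : ∀ a (i j : Fin r), mul (c a j i) (e i) = c a j i
  -- (a3)
  tr_comm : ∀ a b, (∑ i, ρ i (mul a b)) = ∑ i, ρ i (mul b a)
  -- (a4)
  tr_assoc : ∀ a b d, (∑ i, ρ i (mul (mul a b) d)) = ∑ i, ρ i (mul a (mul b d))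
  -- (a5)
  tr_nonneg : ∀ a, 0 ≤ ∑ i, ρ i (mul a (conj a))
  tr_pos : ∀ a, (∑ i, ρ i (mul a (conj a))) = 0 → a = 0
  -- (a6)
  assoc6 : ∀ i j k l : Fin r, i ≤ j → j ≤ k → k ≤ l →
    ∀ x ∈ S i j, ∀ y ∈ S j k, ∀ z ∈ S k l, mul x (mul y z) = mul (mul x y) z
  -- (a7)
  assoc7 : ∀ i j k l : Fin r, i ≤ j → j ≤ k → l ≤ k →
    ∀ x ∈ S i j, ∀ y ∈ S j k, ∀ z ∈ S l k,
      mul x (mul y (conj z)) = mul (mul x y) (conj z)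

namespace TAlgebra

variable {A : Type*} [AddCommGroup A] [Module ℝ A] {r : ℕ} (T : TAlgebra A r)

/-- `t` is upper triangular: all components `t_{ij}` with `j < i` vanish. -/
def UpperTriangular (t : A) : Prop := ∀ i j : Fin r, j < i → T.c t i j = 0

/-- The set `T₊` of upper triangular elements with nonnegative diagonal. -/
def Tplus : Set A := {t | T.UpperTriangular t ∧ ∀ i, 0 ≤ T.ρ i t}

/-- The closed homogeneous cone `cl C(A) = {tt* : t ∈ T₊}`. -/
def clCone : Set A := {x | ∃ t ∈ T.Tplus, x = T.mul t (T.conj t)}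

/-- `t ∈ T₊` is proper if `ρ_i(t_{ii}) = 0` implies that the `i`-th column of `t`
vanishes. -/
def Proper (t : A) : Prop :=
  t ∈ T.Tplus ∧ ∀ i : Fin r, T.ρ i t = 0 → ∀ k : Fin r, T.c t k i = 0

/-- The trace of the T-algebra. -/
def tr (a : A) : ℝ := ∑ i, T.ρ i a

/-- The inner product `⟨a,b⟩ = tr (a b*)` of the T-algebra. -/
def inner' (a b : A) : ℝ := T.tr (T.mul a (T.conj b))

end TAlgebra

/-- `F` is a face of the convex cone `K`. -/
def IsFace {M : Type*} [AddCommGroup M] [Module ℝ M] (K F : Set M) : Prop :=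
  F.Nonempty ∧ Convex ℝ F ∧ (∀ x ∈ F, ∀ c : ℝ, 0 ≤ c → c • x ∈ F) ∧ F ⊆ K ∧
    ∀ x ∈ K, ∀ y ∈ K, x + y ∈ F → x ∈ F ∧ y ∈ F


namespace TAlgebra

variable {A : Type*} [AddCommGroup A] [Module ℝ A] {r : ℕ} (T : TAlgebra A r)

section Basic

lemma c_add (a b : A) (i j : Fin r) : T.c (a + b) i j = T.c a i j + T.c b i j := by
  have := T.c_unique (a + b) (fun i j => T.c a i j + T.c b i j)
    (fun i j => (T.S i j).add_mem (T.c_mem a i j) (T.c_mem b i j))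
    (by simp only [Finset.sum_add_distrib, T.c_sum])
  exact this i j

lemma c_smul (s : ℝ) (a : A) (i j : Fin r) : T.c (s • a) i j = s • T.c a i j := by
  have := T.c_unique (s • a) (fun i j => s • T.c a i j)
    (fun i j => (T.S i j).smul_mem s (T.c_mem a i j))
    (by rw [show (∑ i, ∑ j, s • T.c a i j) = s • ∑ i, ∑ j, T.c a i j by
          rw [Finset.smul_sum]; exact Finset.sum_congr rfl fun i _ => (Finset.smul_sum).symm]
        rw [T.c_sum])
  exact this i j

lemma c_zero (i j : Fin r) : T.c 0 i j = 0 := by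
  have := T.c_smul (0 : ℝ) (0 : A) i j; simpa using this

lemma c_neg (a : A) (i j : Fin r) : T.c (-a) i j = - T.c a i j := by
  have := T.c_smul (-1 : ℝ) a i j; simpa using this

lemma c_sub (a b : A) (i j : Fin r) : T.c (a - b) i j = T.c a i j - T.c b i j := by
  rw [sub_eq_add_neg, T.c_add, T.c_neg, sub_eq_add_neg]

lemma c_finsum {ι : Type*} (s : Finset ι) (f : ι → A) (i j : Fin r) :
    T.c (∑ k ∈ s, f k) i j = ∑ k ∈ s, T.c (f k) i j := by
  classical
  induction s using Finset.induction with
  | empty => simpa using T.c_zero i j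
  | insert k s' h ih => rw [Finset.sum_insert h, Finset.sum_insert h, T.c_add, ih]

lemma c_of_mem {x : A} {i j : Fin r} (h : x ∈ T.S i j) (k l : Fin r) :
    T.c x k l = if i = k ∧ j = l then x else 0 := by
  have := T.c_unique x (fun k l => if i = k ∧ j = l then x else 0)
    (fun k l => by
      show (if i = k ∧ j = l then x else 0) ∈ T.S k l
      by_cases hkl : i = k ∧ j = l
      · rw [if_pos hkl]; exact hkl.1 ▸ hkl.2 ▸ h
      · rw [if_neg hkl]; exact (T.S k l).zero_mem)
    (by
      rw [Finset.sum_comm] -- no-op manner; just compute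
      have : ∀ k : Fin r, (∑ l, if i = k ∧ j = l then x else 0) = if i = k then x else 0 := by
        intro k
        by_cases hk : i = k
        · simp only [hk, true_and]
          rw [Finset.sum_ite_eq (Finset.univ) j (fun _ => x)]
          simp
        · simp [hk]
      rw [Finset.sum_comm]
      calc (∑ k, ∑ l, if i = k ∧ j = l then x else 0) = ∑ k, if i = k then x else 0 := by
            exact Finset.sum_congr rfl fun k _ => this k
        _ = x := by rw [Finset.sum_ite_eq (Finset.univ) i (fun _ => x)]; simp)
  exact this k l

lemma c_self {x : A} {i j : Fin r} (h : x ∈ T.S i j) : T.c x i j = x := by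
  rw [T.c_of_mem h]; simp

lemma c_other {x : A} {i j : Fin r} (h : x ∈ T.S i j) {k l : Fin r} (hkl : ¬ (i = k ∧ j = l)) :
    T.c x k l = 0 := by rw [T.c_of_mem h, if_neg hkl]

lemma c_c (a : A) (i j k l : Fin r) :
    T.c (T.c a i j) k l = if i = k ∧ j = l then T.c a i j else 0 :=
  T.c_of_mem (T.c_mem a i j) k l

lemma c_conj (a : A) (i j : Fin r) : T.c (T.conj a) i j = T.conj (T.c a j i) := by
  have := T.c_unique (T.conj a) (fun i j => T.conj (T.c a j i))
    (fun i j => T.conj_grade j i _ (T.c_mem a j i))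
    (by
      have : (∑ i, ∑ j, T.conj (T.c a j i)) = T.conj (∑ i, ∑ j, T.c a j i) := by
        rw [map_sum]; exact Finset.sum_congr rfl fun i _ => (map_sum _ _ _).symm
      rw [this, Finset.sum_comm, T.c_sum])
  exact this i j

lemma smul_e_cancel {i : Fin r} {s t : ℝ} (h : s • T.e i = t • T.e i) : s = t := by
  by_contra hne
  have h2 : (s - t) • T.e i = 0 := by rw [sub_smul, h, sub_self]
  have h3 : s - t ≠ 0 := sub_ne_zero.mpr hne
  exact T.e_ne i (by
    have := congrArg (fun z => (s - t)⁻¹ • z) h2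
    simpa [smul_smul, inv_mul_cancel₀ h3] using this)

lemma ρ_add (i : Fin r) (a b : A) : T.ρ i (a + b) = T.ρ i a + T.ρ i b := by
  apply T.smul_e_cancel (i := i)
  rw [← T.diag_coord, T.c_add, T.diag_coord, T.diag_coord, add_smul]

lemma ρ_smul (i : Fin r) (s : ℝ) (a : A) : T.ρ i (s • a) = s * T.ρ i a := by
  apply T.smul_e_cancel (i := i)
  rw [← T.diag_coord, T.c_smul, T.diag_coord, smul_smul]

lemma ρ_zero (i : Fin r) : T.ρ i (0 : A) = 0 := by
  have := T.ρ_smul i 0 0; simpa using this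

lemma ρ_neg (i : Fin r) (a : A) : T.ρ i (-a) = - T.ρ i a := by
  have := T.ρ_smul i (-1) a; simpa using this

lemma ρ_sub (i : Fin r) (a b : A) : T.ρ i (a - b) = T.ρ i a - T.ρ i b := by
  rw [sub_eq_add_neg, T.ρ_add, T.ρ_neg, sub_eq_add_neg]

lemma ρ_finsum {ι : Type*} (s : Finset ι) (f : ι → A) (i : Fin r) :
    T.ρ i (∑ k ∈ s, f k) = ∑ k ∈ s, T.ρ i (f k) := by
  classical
  induction s using Finset.induction with
  | empty => simpa using T.ρ_zero i
  | insert k s' h ih => rw [Finset.sum_insert h, Finset.sum_insert h, T.ρ_add, ih]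

lemma ρ_conj (i : Fin r) (a : A) : T.ρ i (T.conj a) = T.ρ i a := by
  apply T.smul_e_cancel (i := i)
  rw [← T.diag_coord, T.c_conj, T.diag_coord, map_smul, T.conj_e]

lemma ρ_c_diag (a : A) (i : Fin r) : T.ρ i (T.c a i i) = T.ρ i a := by
  apply T.smul_e_cancel (i := i)
  rw [← T.diag_coord (T.c a i i) i, ← T.diag_coord a i]
  simpa using T.c_c a i i i i

lemma ρ_graded_ne {x : A} {k l : Fin r} (h : x ∈ T.S k l) {i : Fin r}
    (hne : ¬ (k = i ∧ l = i)) : T.ρ i x = 0 := by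
  have h0 : T.c x i i = 0 := T.c_other h hne
  have := T.diag_coord x i
  rw [h0] at this
  exact T.smul_e_cancel (i := i) (by rw [← this]; simp)

end Basic

end TAlgebra
namespace TAlgebra

variable {A : Type*} [AddCommGroup A] [Module ℝ A] {r : ℕ} (T : TAlgebra A r)

section MulExpand

lemma mul_zero' (a : A) : T.mul a 0 = 0 := map_zero (T.mul a)

lemma zero_mul' (a : A) : T.mul 0 a = 0 := by
  rw [show (0 : A) = (0:ℝ) • (0:A) by simp]
  rw [map_smul]; simp

lemma mul_graded_zero {a b : A} {i j k l : Fin r} (h : j ≠ k) :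
    T.mul (T.c a i j) (T.c b k l) = 0 :=
  T.grade_mul_zero i j k l h _ (T.c_mem a i j) _ (T.c_mem b k l)

lemma mul_expand (a b : A) :
    T.mul a b = ∑ i, ∑ j, ∑ k, T.mul (T.c a i j) (T.c b j k) := by
  have h0 : T.mul a b = ∑ i, ∑ j, (T.mul (T.c a i j)) b := by
    conv_lhs => rw [← T.c_sum a]
    simp only [map_sum, LinearMap.coe_sum, Finset.sum_apply]
  rw [h0]
  apply Finset.sum_congr rfl; intro i _
  apply Finset.sum_congr rfl; intro j _
  conv_lhs => rw [← T.c_sum b]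
  rw [map_sum]
  rw [Finset.sum_eq_single j]
  · exact map_sum _ _ _
  · intro k _ hk
    rw [map_sum]
    apply Finset.sum_eq_zero; intro l _
    exact T.mul_graded_zero (Ne.symm hk)
  · intro h; exact absurd (Finset.mem_univ j) h

lemma c_mul (a b : A) (i k : Fin r) :
    T.c (T.mul a b) i k = ∑ j, T.mul (T.c a i j) (T.c b j k) := by
  have := T.c_unique (T.mul a b) (fun i k => ∑ j, T.mul (T.c a i j) (T.c b j k))
    (fun i k => Submodule.sum_mem _ fun j _ =>
      T.grade_mul i j k _ (T.c_mem a i j) _ (T.c_mem b j k))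
    (by conv_rhs => rw [T.mul_expand a b]
        exact Finset.sum_congr rfl fun i _ => Finset.sum_comm)
  exact this i k

/-- The identity element `e = ∑ i, e i`. -/
def eSum : A := ∑ i, T.e i

lemma c_e (i k l : Fin r) : T.c (T.e i) k l = if i = k ∧ i = l then T.e i else 0 :=
  T.c_of_mem (T.e_mem i) k l

lemma c_eSum (k l : Fin r) : T.c T.eSum k l = if k = l then T.e k else 0 := by
  rw [eSum, T.c_finsum]
  by_cases h : k = l
  · subst h
    rw [Finset.sum_eq_single k]
    · rw [T.c_e]; simp
    · intro i _ hik; rw [T.c_e, if_neg (by tauto)]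
    · intro h; exact absurd (Finset.mem_univ k) h
  · rw [if_neg h]
    apply Finset.sum_eq_zero; intro i _
    rw [T.c_e, if_neg (by rintro ⟨rfl, rfl⟩; exact h rfl)]

lemma eSum_mul (a : A) : T.mul T.eSum a = a := by
  rw [T.mul_expand]
  conv_rhs => rw [← T.c_sum a]
  apply Finset.sum_congr rfl; intro i _
  rw [Finset.sum_eq_single i]
  · apply Finset.sum_congr rfl; intro k _
    rw [T.c_eSum]; simp [T.e_mul]
  · intro j _ hj; apply Finset.sum_eq_zero; intro k _
    rw [T.c_eSum, if_neg (fun h => hj h.symm), T.zero_mul']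
  · intro h; exact absurd (Finset.mem_univ i) h

lemma mul_eSum (a : A) : T.mul a T.eSum = a := by
  rw [T.mul_expand]
  conv_rhs => rw [← T.c_sum a]
  apply Finset.sum_congr rfl; intro i _
  apply Finset.sum_congr rfl; intro j _
  rw [Finset.sum_eq_single j]
  · rw [T.c_eSum]; simpa using T.mul_e a j i
  · intro k _ hk; rw [T.c_eSum, if_neg (fun h => hk h.symm), T.mul_zero']
  · intro h; exact absurd (Finset.mem_univ j) h

lemma conj_eSum : T.conj T.eSum = T.eSum := by
  rw [eSum, map_sum]; exact Finset.sum_congr rfl fun i _ => T.conj_e i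

end MulExpand

section Trace

lemma tr_add (a b : A) : T.tr (a + b) = T.tr a + T.tr b := by
  simp [tr, T.ρ_add, Finset.sum_add_distrib]

lemma tr_smul (s : ℝ) (a : A) : T.tr (s • a) = s * T.tr a := by
  simp [tr, T.ρ_smul, Finset.mul_sum]

lemma tr_zero : T.tr (0 : A) = 0 := by simp [tr, T.ρ_zero]

lemma tr_neg (a : A) : T.tr (-a) = - T.tr a := by simp [tr, T.ρ_neg]

lemma tr_sub (a b : A) : T.tr (a - b) = T.tr a - T.tr b := by simp [tr, T.ρ_sub, Finset.sum_sub_distrib]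

lemma tr_conj (a : A) : T.tr (T.conj a) = T.tr a := by simp [tr, T.ρ_conj]

lemma tr_mul_comm (a b : A) : T.tr (T.mul a b) = T.tr (T.mul b a) := T.tr_comm a b

lemma tr_mul_assoc (a b d : A) : T.tr (T.mul (T.mul a b) d) = T.tr (T.mul a (T.mul b d)) :=
  T.tr_assoc a b d

lemma tr_graded {x : A} {i j : Fin r} (h : x ∈ T.S i j) (hij : i ≠ j) : T.tr x = 0 := by
  simp only [tr]
  apply Finset.sum_eq_zero; intro k _
  exact T.ρ_graded_ne h (by rintro ⟨rfl, rfl⟩; exact hij rfl)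

lemma tr_graded_diag {x : A} {i : Fin r} (h : x ∈ T.S i i) : T.tr x = T.ρ i x := by
  simp only [tr]
  rw [Finset.sum_eq_single i]
  · intro k _ hk; exact T.ρ_graded_ne h (by rintro ⟨rfl, _⟩; exact hk rfl)
  · intro h; exact absurd (Finset.mem_univ i) h

/-- squared norm -/
def nsq (a : A) : ℝ := T.tr (T.mul a (T.conj a))

lemma nsq_nonneg (a : A) : 0 ≤ T.nsq a := T.tr_nonneg a

lemma nsq_eq_zero {a : A} (h : T.nsq a = 0) : a = 0 := T.tr_pos a h

lemma nsq_zero : T.nsq (0 : A) = 0 := by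
  simp only [nsq, map_zero, T.zero_mul', tr_zero]

lemma nsq_pos {a : A} (h : a ≠ 0) : 0 < T.nsq a :=
  lt_of_le_of_ne (T.nsq_nonneg a) (fun hh => h (T.nsq_eq_zero hh.symm))

end Trace

end TAlgebra
namespace TAlgebra

variable {A : Type*} [AddCommGroup A] [Module ℝ A] {r : ℕ} (T : TAlgebra A r)

section Triangular

lemma ut_zero : T.UpperTriangular 0 := fun i j _ => T.c_zero i j

lemma ut_add {t u : A} (ht : T.UpperTriangular t) (hu : T.UpperTriangular u) :
    T.UpperTriangular (t + u) := fun i j h => by rw [T.c_add, ht i j h, hu i j h, add_zero]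

lemma ut_smul (s : ℝ) {t : A} (ht : T.UpperTriangular t) : T.UpperTriangular (s • t) :=
  fun i j h => by rw [T.c_smul, ht i j h, smul_zero]

lemma ut_sub {t u : A} (ht : T.UpperTriangular t) (hu : T.UpperTriangular u) :
    T.UpperTriangular (t - u) := fun i j h => by rw [T.c_sub, ht i j h, hu i j h, sub_zero]

lemma ut_of_mem {x : A} {i j : Fin r} (hx : x ∈ T.S i j) (hij : i ≤ j) :
    T.UpperTriangular x := fun k l h =>
  T.c_other hx (by rintro ⟨rfl, rfl⟩; exact absurd hij (not_le.mpr h))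

lemma ut_e (i : Fin r) : T.UpperTriangular (T.e i) := T.ut_of_mem (T.e_mem i) le_rfl

lemma ut_eSum : T.UpperTriangular T.eSum := fun i j h => by
  rw [T.c_eSum, if_neg (Fin.ne_of_gt h)]

lemma ut_mul {t u : A} (ht : T.UpperTriangular t) (hu : T.UpperTriangular u) :
    T.UpperTriangular (T.mul t u) := by
  intro i j h
  rw [T.c_mul]
  apply Finset.sum_eq_zero; intro k _
  by_cases hik : k < i
  · rw [ht i k hik, T.zero_mul']
  · have : j < k := lt_of_lt_of_le h (not_lt.mp hik)
    rw [hu k j this, T.mul_zero']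

lemma ut_finsum {ι : Type*} (s : Finset ι) (f : ι → A) (hf : ∀ k ∈ s, T.UpperTriangular (f k)) :
    T.UpperTriangular (∑ k ∈ s, f k) := fun i j h => by
  rw [T.c_finsum]
  exact Finset.sum_eq_zero fun k hk => hf k hk i j h

end Triangular

section Assoc

lemma mul_mul_expand (a b d : A) :
    T.mul (T.mul a b) d = ∑ i, ∑ k, ∑ l, ∑ j, T.mul (T.mul (T.c a i j) (T.c b j k)) (T.c d k l) := by
  rw [T.mul_expand (T.mul a b) d]
  apply Finset.sum_congr rfl; intro i _
  apply Finset.sum_congr rfl; intro k _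
  apply Finset.sum_congr rfl; intro l _
  rw [T.c_mul]
  simp only [map_sum, LinearMap.coe_sum, Finset.sum_apply]

lemma mul_mul_expand' (a b d : A) :
    T.mul a (T.mul b d) = ∑ i, ∑ j, ∑ k, ∑ l, T.mul (T.c a i j) (T.mul (T.c b j k) (T.c d k l)) := by
  rw [T.mul_expand a (T.mul b d)]
  apply Finset.sum_congr rfl; intro i _
  apply Finset.sum_congr rfl; intro j _
  calc (∑ m, T.mul (T.c a i j) (T.c (T.mul b d) j m))
      = ∑ m, ∑ k, T.mul (T.c a i j) (T.mul (T.c b j k) (T.c d k m)) := by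
        apply Finset.sum_congr rfl; intro m _
        rw [T.c_mul, map_sum]
    _ = ∑ k, ∑ m, T.mul (T.c a i j) (T.mul (T.c b j k) (T.c d k m)) := Finset.sum_comm

lemma mul_assoc_of (a b d : A)
    (H : ∀ i j k l, T.mul (T.mul (T.c a i j) (T.c b j k)) (T.c d k l)
      = T.mul (T.c a i j) (T.mul (T.c b j k) (T.c d k l))) :
    T.mul (T.mul a b) d = T.mul a (T.mul b d) := by
  rw [T.mul_mul_expand, T.mul_mul_expand']
  apply Finset.sum_congr rfl; intro i _
  calc (∑ k, ∑ l, ∑ j, T.mul (T.mul (T.c a i j) (T.c b j k)) (T.c d k l))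
      = ∑ k, ∑ l, ∑ j, T.mul (T.c a i j) (T.mul (T.c b j k) (T.c d k l)) :=
        Finset.sum_congr rfl fun k _ => Finset.sum_congr rfl fun l _ =>
          Finset.sum_congr rfl fun j _ => H i j k l
    _ = ∑ k, ∑ j, ∑ l, T.mul (T.c a i j) (T.mul (T.c b j k) (T.c d k l)) :=
        Finset.sum_congr rfl fun k _ => Finset.sum_comm
    _ = ∑ j, ∑ k, ∑ l, T.mul (T.c a i j) (T.mul (T.c b j k) (T.c d k l)) := Finset.sum_comm

/-- left multiplication by triangulars is associative -/
lemma lmul_assoc {t u : A} (ht : T.UpperTriangular t) (hu : T.UpperTriangular u) (x : A) :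
    T.mul (T.mul t u) x = T.mul t (T.mul u x) := by
  apply T.mul_assoc_of
  intro i j k l
  by_cases hij : i ≤ j
  swap
  · rw [ht i j (not_le.mp hij), T.zero_mul', T.zero_mul', T.zero_mul']
  by_cases hjk : j ≤ k
  swap
  · rw [hu j k (not_le.mp hjk)]; simp only [T.mul_zero', T.zero_mul']
  by_cases hkl : k ≤ l
  · exact (T.assoc6 i j k l hij hjk hkl _ (T.c_mem t i j) _ (T.c_mem u j k) _ (T.c_mem x k l)).symm
  · have hlk : l ≤ k := le_of_not_ge hkl
    have hz := T.assoc7 i j k l hij hjk hlk _ (T.c_mem t i j) _ (T.c_mem u j k)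
      (T.conj (T.c x k l)) (T.conj_grade k l _ (T.c_mem x k l))
    rw [T.conj_conj] at hz
    exact hz.symm

/-- mixed associativity `(t x) u* = t (x u*)` for triangular `t, u`. -/
lemma mid_assoc {t u : A} (ht : T.UpperTriangular t) (hu : T.UpperTriangular u) (x : A) :
    T.mul (T.mul t x) (T.conj u) = T.mul t (T.mul x (T.conj u)) := by
  apply T.mul_assoc_of
  intro i j k l
  rw [T.c_conj u k l]
  by_cases hij : i ≤ j
  swap
  · rw [ht i j (not_le.mp hij), T.zero_mul', T.zero_mul', T.zero_mul']
  by_cases hlk : l ≤ k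
  swap
  · rw [hu l k (not_le.mp hlk), map_zero, T.mul_zero', T.mul_zero', T.mul_zero']
  by_cases hjk : j ≤ k
  · exact (T.assoc7 i j k l hij hjk hlk _ (T.c_mem t i j) _ (T.c_mem x j k) _ (T.c_mem u l k)).symm
  · have hkj : k ≤ j := le_of_not_ge hjk
    have hz := T.assoc7 l k j i hlk hkj hij _ (T.c_mem u l k)
      (T.conj (T.c x j k)) (T.conj_grade j k _ (T.c_mem x j k)) _ (T.c_mem t i j)
    have := congrArg T.conj hz
    simp only [T.conj_mul, T.conj_conj] at this
    exact this

/-- right multiplication by conjugates of triangulars is associative -/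
lemma rmul_assoc {t u : A} (ht : T.UpperTriangular t) (hu : T.UpperTriangular u) (x : A) :
    T.mul (T.mul x (T.conj u)) (T.conj t) = T.mul x (T.mul (T.conj u) (T.conj t)) := by
  have hz := congrArg T.conj (T.lmul_assoc ht hu (T.conj x))
  simp only [T.conj_mul, T.conj_conj] at hz
  exact hz.symm

/-- `p (v v*) p* = (p v)(p v)*` for triangular `p, v`. -/
lemma mul_sq {p v : A} (hp : T.UpperTriangular p) (hv : T.UpperTriangular v) :
    T.mul (T.mul p (T.mul v (T.conj v))) (T.conj p) = T.mul (T.mul p v) (T.conj (T.mul p v)) := by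
  rw [← T.lmul_assoc hp hv (T.conj v)]
  rw [T.rmul_assoc hp hv (T.mul p v)]
  rw [← T.conj_mul]

/-- `u (q x q*) u* = (u q) x (u q)*` for triangular `u, q`. -/
lemma mul_cong {u q : A} (hu : T.UpperTriangular u) (hq : T.UpperTriangular q) (x : A) :
    T.mul (T.mul u (T.mul (T.mul q x) (T.conj q))) (T.conj u)
      = T.mul (T.mul (T.mul u q) x) (T.conj (T.mul u q)) := by
  rw [show T.mul u (T.mul (T.mul q x) (T.conj q)) = T.mul (T.mul u (T.mul q x)) (T.conj q) from
    (T.mid_assoc hu hq (T.mul q x)).symm]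
  rw [← T.lmul_assoc hu hq x]
  rw [T.rmul_assoc hu hq (T.mul (T.mul u q) x)]
  rw [← T.conj_mul]

end Assoc

end TAlgebra
namespace TAlgebra

variable {A : Type*} [AddCommGroup A] [Module ℝ A] {r : ℕ} (T : TAlgebra A r)

section Window

/-- `x` is supported in the principal window of indices `< m`. -/
def Win (m : ℕ) (x : A) : Prop := ∀ i j : Fin r, (m ≤ (i:ℕ) ∨ m ≤ (j:ℕ)) → T.c x i j = 0

lemma win_zero (m : ℕ) : T.Win m (0 : A) := fun i j _ => T.c_zero i j

lemma win_add {m : ℕ} {x y : A} (hx : T.Win m x) (hy : T.Win m y) : T.Win m (x + y) :=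
  fun i j h => by rw [T.c_add, hx i j h, hy i j h, add_zero]

lemma win_smul {m : ℕ} (s : ℝ) {x : A} (hx : T.Win m x) : T.Win m (s • x) :=
  fun i j h => by rw [T.c_smul, hx i j h, smul_zero]

lemma win_sub {m : ℕ} {x y : A} (hx : T.Win m x) (hy : T.Win m y) : T.Win m (x - y) :=
  fun i j h => by rw [T.c_sub, hx i j h, hy i j h, sub_zero]

lemma win_mono {m m' : ℕ} (h : m ≤ m') {x : A} (hx : T.Win m x) : T.Win m' x :=
  fun i j hh => hx i j (by rcases hh with h1 | h1; exacts [Or.inl (h.trans h1), Or.inr (h.trans h1)])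

lemma win_top (x : A) : T.Win r x := fun i j h => by
  rcases h with h1 | h1
  · exact absurd i.isLt (not_lt.mpr h1)
  · exact absurd j.isLt (not_lt.mpr h1)

lemma win_conj {m : ℕ} {x : A} (hx : T.Win m x) : T.Win m (T.conj x) :=
  fun i j h => by rw [T.c_conj, hx j i (Or.symm h), map_zero]

lemma win_mul {m : ℕ} {x y : A} (hx : T.Win m x) (hy : T.Win m y) : T.Win m (T.mul x y) := by
  intro i j h
  rw [T.c_mul]
  apply Finset.sum_eq_zero; intro k _
  rcases h with h1 | h1
  · rw [hx i k (Or.inl h1), T.zero_mul']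
  · rw [hy k j (Or.inr h1), T.mul_zero']

lemma win_finsum {m : ℕ} {ι : Type*} (s : Finset ι) (f : ι → A)
    (hf : ∀ k ∈ s, T.Win m (f k)) : T.Win m (∑ k ∈ s, f k) := fun i j h => by
  rw [T.c_finsum]; exact Finset.sum_eq_zero fun k hk => hf k hk i j h

lemma win_e {m : ℕ} {i : Fin r} (h : (i:ℕ) < m) : T.Win m (T.e i) := fun k l hh => by
  apply T.c_other (T.e_mem i)
  rintro ⟨rfl, rfl⟩
  rcases hh with h1 | h1 <;> exact absurd h (not_lt.mpr h1)

/-- separation lemma: products vanish when the columns of `y` and rows of `z` don't meet -/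
lemma mul_eq_zero_sep (y z : A) (P : Fin r → Prop)
    (hy : ∀ p q, P q → T.c y p q = 0) (hz : ∀ q s, ¬ P q → T.c z q s = 0) :
    T.mul y z = 0 := by
  rw [T.mul_expand]
  apply Finset.sum_eq_zero; intro i _
  apply Finset.sum_eq_zero; intro j _
  apply Finset.sum_eq_zero; intro k _
  by_cases h : P j
  · rw [hy i j h, T.zero_mul']
  · rw [hz j k h, T.mul_zero']

end Window

section Quad

/-- the quadratic form `u ↦ tr (u x u*)` -/
def quad (x u : A) : ℝ := T.tr (T.mul (T.mul u x) (T.conj u))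

lemma quad_add_x (x y u : A) : T.quad (x + y) u = T.quad x u + T.quad y u := by
  simp only [quad, map_add, LinearMap.add_apply, T.tr_add]

lemma quad_smul_x (s : ℝ) (x u : A) : T.quad (s • x) u = s * T.quad x u := by
  simp only [quad, map_smul, LinearMap.smul_apply, T.tr_smul]

lemma quad_sub_x (x y u : A) : T.quad (x - y) u = T.quad x u - T.quad y u := by
  simp only [quad, map_sub, LinearMap.sub_apply, T.tr_sub]

lemma quad_zero_x (u : A) : T.quad (0 : A) u = 0 := by
  simp only [quad, map_zero, LinearMap.zero_apply, T.mul_zero', T.zero_mul', T.tr_zero]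

/-- `quad (v v*) u = ‖u v‖²` for triangular `u, v` -/
lemma quad_sq {u v : A} (hu : T.UpperTriangular u) (hv : T.UpperTriangular v) :
    T.quad (T.mul v (T.conj v)) u = T.nsq (T.mul u v) := by
  unfold quad nsq
  exact congrArg T.tr (T.mul_sq hu hv)

/-- `quad (q x q*) u = quad x (u q)` for triangular `u, q` -/
lemma quad_cong {u q : A} (hu : T.UpperTriangular u) (hq : T.UpperTriangular q) (x : A) :
    T.quad (T.mul (T.mul q x) (T.conj q)) u = T.quad x (T.mul u q) :=
  congrArg T.tr (T.mul_cong hu hq x)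

lemma quad_bilin (x u v : A) : T.quad x (u + v) =
    T.quad x u + T.quad x v
      + T.tr (T.mul (T.mul u x) (T.conj v)) + T.tr (T.mul (T.mul v x) (T.conj u)) := by
  simp only [quad, map_add, LinearMap.add_apply, T.tr_add]
  ring

lemma quad_smul_u (s : ℝ) (x u : A) : T.quad x (s • u) = s^2 * T.quad x u := by
  simp only [quad, map_smul, LinearMap.smul_apply, T.tr_smul]
  ring

/-- windowed positivity -/
def PosW (m : ℕ) (x : A) : Prop :=
  T.conj x = x ∧ ∀ u, T.UpperTriangular u → T.Win m u → 0 ≤ T.quad x u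

lemma posW_add {m : ℕ} {x y : A} (hx : T.PosW m x) (hy : T.PosW m y) : T.PosW m (x + y) :=
  ⟨by rw [map_add, hx.1, hy.1], fun u hu hw => by
    rw [T.quad_add_x]; exact add_nonneg (hx.2 u hu hw) (hy.2 u hu hw)⟩

lemma posW_smul {m : ℕ} {s : ℝ} (hs : 0 ≤ s) {x : A} (hx : T.PosW m x) : T.PosW m (s • x) :=
  ⟨by rw [map_smul, hx.1], fun u hu hw => by
    rw [T.quad_smul_x]; exact mul_nonneg hs (hx.2 u hu hw)⟩

lemma posW_zero (m : ℕ) : T.PosW m (0 : A) :=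
  ⟨map_zero _, fun u _ _ => le_of_eq (T.quad_zero_x u).symm⟩

lemma posW_anti {m m' : ℕ} (h : m ≤ m') {x : A} (hx : T.PosW m' x) : T.PosW m x :=
  ⟨hx.1, fun u hu hw => hx.2 u hu (T.win_mono h hw)⟩

lemma posW_sq (m : ℕ) {v : A} (hv : T.UpperTriangular v) : T.PosW m (T.mul v (T.conj v)) :=
  ⟨by rw [T.conj_mul, T.conj_conj], fun u hu _ => by
    rw [T.quad_sq hu hv]; exact T.nsq_nonneg _⟩

end Quad

section RowCol

lemma e_mul_left (x : A) (i : Fin r) : T.mul (T.e i) x = ∑ k, T.c x i k := by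
  rw [T.mul_expand]
  rw [Finset.sum_eq_single i]
  · rw [Finset.sum_eq_single i]
    · apply Finset.sum_congr rfl; intro k _
      rw [T.c_self (T.e_mem i), T.e_mul]
    · intro j _ hj
      apply Finset.sum_eq_zero; intro k _
      rw [T.c_other (T.e_mem i) (by tauto), T.zero_mul']
    · intro h; exact absurd (Finset.mem_univ i) h
  · intro p _ hp
    apply Finset.sum_eq_zero; intro j _
    apply Finset.sum_eq_zero; intro k _
    rw [T.c_other (T.e_mem i) (by rintro ⟨rfl, _⟩; exact hp rfl), T.zero_mul']
  · intro h; exact absurd (Finset.mem_univ i) h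

lemma tr_mul_e (y : A) (i : Fin r) : T.tr (T.mul y (T.e i)) = T.ρ i y := by
  have hc : ∀ k, T.c (T.mul y (T.e i)) k k = if k = i then T.c y i i else 0 := by
    intro k
    rw [T.c_mul]
    by_cases hk : k = i
    · subst hk
      rw [if_pos rfl]
      rw [Finset.sum_eq_single k]
      · rw [T.c_self (T.e_mem k), T.mul_e]
      · intro q _ hq
        rw [T.c_other (T.e_mem k) (by tauto), T.mul_zero']
      · intro h; exact absurd (Finset.mem_univ k) h
    · rw [if_neg hk]
      apply Finset.sum_eq_zero; intro q _
      by_cases hqi : i = q ∧ i = k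
      · exact absurd hqi.2 (fun h => hk h.symm)
      · rw [T.c_other (T.e_mem i) hqi, T.mul_zero']
  have hρ : ∀ k, T.ρ k (T.mul y (T.e i)) = if k = i then T.ρ i y else 0 := by
    intro k
    by_cases hk : k = i
    · subst hk
      rw [if_pos rfl]
      calc T.ρ k (T.mul y (T.e k)) = T.ρ k (T.c (T.mul y (T.e k)) k k) := (T.ρ_c_diag _ k).symm
        _ = T.ρ k (T.c y k k) := by rw [hc k, if_pos rfl]
        _ = T.ρ k y := T.ρ_c_diag y k
    · rw [if_neg hk]
      calc T.ρ k (T.mul y (T.e i)) = T.ρ k (T.c (T.mul y (T.e i)) k k) := (T.ρ_c_diag _ k).symm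
        _ = 0 := by rw [hc k, if_neg hk, T.ρ_zero]
  simp only [tr, hρ]
  rw [Finset.sum_ite_eq' Finset.univ i (fun _ => T.ρ i y)]
  simp

lemma quad_e (x : A) (i : Fin r) : T.quad x (T.e i) = T.ρ i x := by
  unfold quad
  rw [T.conj_e, T.tr_mul_e, T.e_mul_left, T.ρ_finsum]
  rw [Finset.sum_eq_single i]
  · exact T.ρ_c_diag x i
  · intro k _ hk
    exact T.ρ_graded_ne (T.c_mem x i k) (by rintro ⟨-, h2⟩; exact hk h2)
  · intro h; exact absurd (Finset.mem_univ i) h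

lemma c_selfadj {x : A} (h : T.conj x = x) (i j : Fin r) :
    T.c x j i = T.conj (T.c x i j) := by
  conv_lhs => rw [← h]
  rw [T.c_conj]

end RowCol

end TAlgebra
namespace TAlgebra

variable {A : Type*} [AddCommGroup A] [Module ℝ A] {r : ℕ} (T : TAlgebra A r)

section Col

lemma c_ext {x y : A} (h : ∀ i j, T.c x i j = T.c y i j) : x = y := by
  rw [← T.c_sum x, ← T.c_sum y]
  exact Finset.sum_congr rfl fun i _ => Finset.sum_congr rfl fun j _ => h i j

lemma mul_e_right (x : A) (i : Fin r) : T.mul x (T.e i) = ∑ k, T.c x k i := by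
  rw [T.mul_expand]
  apply Finset.sum_congr rfl; intro k _
  rw [Finset.sum_eq_single i]
  · rw [Finset.sum_eq_single i]
    · rw [T.c_self (T.e_mem i), T.mul_e]
    · intro j _ hj
      rw [T.c_other (T.e_mem i) (by tauto), T.mul_zero']
    · intro h; exact absurd (Finset.mem_univ i) h
  · intro j _ hj
    apply Finset.sum_eq_zero; intro q _
    rw [T.c_other (T.e_mem i) (by rintro ⟨rfl, -⟩; exact hj rfl), T.mul_zero']
  · intro h; exact absurd (Finset.mem_univ i) h

/-- the strictly-upper part of column `l` of `x` -/
def colP (l : Fin r) (x : A) : A := ∑ i : Fin r, if (i:ℕ) < (l:ℕ) then T.c x i l else 0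

lemma c_colP (l : Fin r) (x : A) (k q : Fin r) :
    T.c (T.colP l x) k q = if ((k:ℕ) < (l:ℕ) ∧ q = l) then T.c x k l else 0 := by
  rw [colP, T.c_finsum]
  have key : ∀ i : Fin r, T.c (if (i:ℕ) < (l:ℕ) then T.c x i l else 0) k q
      = if i = k then (if ((k:ℕ) < (l:ℕ) ∧ q = l) then T.c x k l else 0) else 0 := by
    intro i
    by_cases hi : (i:ℕ) < (l:ℕ)
    · rw [if_pos hi, T.c_c]
      by_cases hik : i = k
      · subst hik
        rw [if_pos rfl]
        by_cases hq : l = q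
        · subst hq; rw [if_pos ⟨rfl, rfl⟩, if_pos ⟨hi, rfl⟩]
        · rw [if_neg (by tauto), if_neg (by rintro ⟨-, rfl⟩; exact hq rfl)]
      · rw [if_neg (by tauto), if_neg hik]
    · rw [if_neg hi, T.c_zero]
      by_cases hik : i = k
      · subst hik
        rw [if_pos rfl, if_neg (by rintro ⟨h1, -⟩; exact hi h1)]
      · rw [if_neg hik]
  rw [Finset.sum_congr rfl (fun i _ => key i)]
  rw [Finset.sum_ite_eq' Finset.univ k (fun _ => if ((k:ℕ) < (l:ℕ) ∧ q = l) then T.c x k l else 0)]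
  simp

lemma ut_colP (l : Fin r) (x : A) : T.UpperTriangular (T.colP l x) := by
  intro k q h
  rw [T.c_colP]
  apply if_neg
  rintro ⟨h1, rfl⟩
  exact absurd h1 (not_lt.mpr (le_of_lt h))

lemma win_colP (l : Fin r) (x : A) : T.Win ((l:ℕ)+1) (T.colP l x) := by
  intro k q h
  rw [T.c_colP]
  apply if_neg
  rintro ⟨h1, rfl⟩
  rcases h with h2 | h2
  · omega
  · omega

lemma c_conj_colP (l : Fin r) (x : A) (p q : Fin r) :
    T.c (T.conj (T.colP l x)) p q
      = if ((q:ℕ) < (l:ℕ) ∧ p = l) then T.conj (T.c x q l) else 0 := by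
  rw [T.c_conj, T.c_colP]
  by_cases h : (q:ℕ) < (l:ℕ) ∧ p = l
  · rw [if_pos h, if_pos h]
  · rw [if_neg h, if_neg h, map_zero]

lemma c_colP_mul_conj (l : Fin r) (x : A) (p q : Fin r) :
    T.c (T.mul (T.colP l x) (T.conj (T.colP l x))) p q
      = if ((p:ℕ) < (l:ℕ) ∧ (q:ℕ) < (l:ℕ)) then T.mul (T.c x p l) (T.conj (T.c x q l)) else 0 := by
  rw [T.c_mul]
  rw [Finset.sum_eq_single l]
  · rw [T.c_colP, T.c_conj_colP]
    by_cases hp : (p:ℕ) < (l:ℕ)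
    · by_cases hq : (q:ℕ) < (l:ℕ)
      · rw [if_pos ⟨hp, rfl⟩, if_pos ⟨hq, rfl⟩, if_pos ⟨hp, hq⟩]
      · rw [if_pos ⟨hp, rfl⟩, if_neg (by tauto), if_neg (by tauto), T.mul_zero']
    · rw [if_neg (by tauto), T.zero_mul', if_neg (by tauto)]
  · intro k _ hk
    rw [T.c_colP, if_neg (by tauto), T.zero_mul']
  · intro h; exact absurd (Finset.mem_univ l) h

lemma mul_colP_colP (l : Fin r) (x : A) : T.mul (T.colP l x) (T.colP l x) = 0 := by
  apply T.mul_eq_zero_sep _ _ (fun q => q ≠ l)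
  · intro p q hq; rw [T.c_colP, if_neg (by tauto)]
  · intro q s hq
    push_neg at hq; subst hq
    rw [T.c_colP, if_neg (by simp)]

lemma mul_colPconj_colPconj (l : Fin r) (x : A) :
    T.mul (T.mul (T.colP l x) (T.conj (T.colP l x))) (T.conj (T.colP l x)) = 0 := by
  apply T.mul_eq_zero_sep _ _ (fun q => (q:ℕ) ≥ (l:ℕ))
  · intro p q hq
    rw [T.c_colP_mul_conj, if_neg (by omega)]
  · intro q s hq
    rw [T.c_conj_colP, if_neg (by rintro ⟨-, rfl⟩; omega)]

lemma mul_colP_e (l : Fin r) (x : A) : T.mul (T.colP l x) (T.e l) = T.colP l x := by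
  rw [T.mul_e_right]
  conv_rhs => rw [colP]
  apply Finset.sum_congr rfl; intro k _
  rw [T.c_colP]
  by_cases h : (k:ℕ) < (l:ℕ)
  · rw [if_pos ⟨h, rfl⟩, if_pos h]
  · rw [if_neg (by tauto), if_neg h]

end Col

end TAlgebra
namespace TAlgebra

variable {A : Type*} [AddCommGroup A] [Module ℝ A] {r : ℕ} (T : TAlgebra A r)

lemma fin_ne_val {q l : Fin r} (h : ¬ q = l) : (q:ℕ) ≠ (l:ℕ) := fun hh => h (Fin.ext hh)

section Schur

lemma mul_b_x {l : Fin r} {x : A} (hsa : T.conj x = x) (hw : T.Win ((l:ℕ)+1) x) :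
    T.mul (T.colP l x) x
      = T.ρ l x • T.colP l x + T.mul (T.colP l x) (T.conj (T.colP l x)) := by
  apply T.c_ext; intro p q
  rw [T.c_mul, T.c_add, T.c_smul, T.c_colP, T.c_colP_mul_conj]
  rw [Finset.sum_eq_single l]
  · rw [T.c_colP]
    by_cases hp : (p:ℕ) < (l:ℕ)
    · rw [if_pos ⟨hp, rfl⟩]
      by_cases hq : q = l
      · subst hq
        rw [T.diag_coord, map_smul, if_pos ⟨hp, rfl⟩, if_neg (by omega)]
        rw [show T.mul (T.c x p q) (T.e q) = T.c x p q from T.mul_e x q p]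
        simp
      · by_cases hql : (q:ℕ) < (l:ℕ)
        · rw [T.c_selfadj hsa q l, if_neg (by tauto), if_pos ⟨hp, hql⟩]
          simp
        · have hlq : (l:ℕ)+1 ≤ (q:ℕ) := by
            have := fin_ne_val hq; omega
          rw [hw l q (Or.inr hlq), T.mul_zero', if_neg (by tauto), if_neg (by omega)]
          simp
    · rw [if_neg (by tauto), T.zero_mul', if_neg (by tauto), if_neg (by omega)]
      simp
  · intro k _ hk
    rw [T.c_colP, if_neg (by tauto), T.zero_mul']
  · intro h; exact absurd (Finset.mem_univ l) h

/-- the Schur complement at the pivot `l` -/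
noncomputable def schur (l : Fin r) (x : A) : A :=
  x - T.colP l x - T.conj (T.colP l x)
    - (T.ρ l x)⁻¹ • T.mul (T.colP l x) (T.conj (T.colP l x)) - T.ρ l x • T.e l

lemma conj_colP_mul_conj (l : Fin r) (x : A) :
    T.conj (T.mul (T.colP l x) (T.conj (T.colP l x))) = T.mul (T.colP l x) (T.conj (T.colP l x)) := by
  rw [T.conj_mul, T.conj_conj]

lemma schur_selfadj {l : Fin r} {x : A} (hsa : T.conj x = x) :
    T.conj (T.schur l x) = T.schur l x := by
  unfold schur
  simp only [map_sub, map_smul, hsa, T.conj_e, T.conj_conj, T.conj_colP_mul_conj]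
  abel

lemma mul_x_conj_b {l : Fin r} {x : A} (hsa : T.conj x = x) (hw : T.Win ((l:ℕ)+1) x) :
    T.mul x (T.conj (T.colP l x))
      = T.ρ l x • T.conj (T.colP l x) + T.mul (T.colP l x) (T.conj (T.colP l x)) := by
  have h := congrArg T.conj (T.mul_b_x hsa hw)
  rw [T.conj_mul, hsa, map_add, map_smul, T.conj_colP_mul_conj] at h
  exact h

lemma key_conj {l : Fin r} {x : A} (hsa : T.conj x = x) (hw : T.Win ((l:ℕ)+1) x)
    (hβ : T.ρ l x ≠ 0) :
    T.mul (T.mul (T.eSum - (T.ρ l x)⁻¹ • T.colP l x) x)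
        (T.conj (T.eSum - (T.ρ l x)⁻¹ • T.colP l x))
      = T.schur l x + T.ρ l x • T.e l := by
  have hinv : ∀ z : A, (T.ρ l x)⁻¹ • (T.ρ l x • z) = z := by
    intro z; rw [smul_smul, inv_mul_cancel₀ hβ, one_smul]
  have hgx : T.mul (T.eSum - (T.ρ l x)⁻¹ • T.colP l x) x
      = x - T.colP l x - (T.ρ l x)⁻¹ • T.mul (T.colP l x) (T.conj (T.colP l x)) := by
    simp only [map_sub, map_smul, LinearMap.sub_apply, LinearMap.smul_apply]
    rw [T.eSum_mul, T.mul_b_x hsa hw, smul_add, hinv]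
    abel
  rw [hgx]
  have hzb : T.mul (x - T.colP l x
        - (T.ρ l x)⁻¹ • T.mul (T.colP l x) (T.conj (T.colP l x))) (T.conj (T.colP l x))
      = T.ρ l x • T.conj (T.colP l x) := by
    simp only [map_sub, map_smul, LinearMap.sub_apply, LinearMap.smul_apply]
    rw [T.mul_x_conj_b hsa hw, T.mul_colPconj_colPconj, smul_zero]
    abel
  rw [show T.conj (T.eSum - (T.ρ l x)⁻¹ • T.colP l x)
      = T.eSum - (T.ρ l x)⁻¹ • T.conj (T.colP l x) from by
    rw [map_sub, map_smul, T.conj_eSum]]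
  rw [map_sub (T.mul (x - T.colP l x
    - (T.ρ l x)⁻¹ • T.mul (T.colP l x) (T.conj (T.colP l x))))]
  rw [map_smul (T.mul (x - T.colP l x
    - (T.ρ l x)⁻¹ • T.mul (T.colP l x) (T.conj (T.colP l x))))]
  rw [T.mul_eSum, hzb, hinv]
  rw [schur]
  abel

lemma schur_win {l : Fin r} {x : A} (hsa : T.conj x = x) (hw : T.Win ((l:ℕ)+1) x) :
    T.Win (l:ℕ) (T.schur l x) := by
  intro p q h
  rw [schur, T.c_sub, T.c_sub, T.c_sub, T.c_sub, T.c_smul, T.c_smul,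
    T.c_colP, T.c_conj_colP, T.c_colP_mul_conj, T.c_of_mem (T.e_mem l)]
  by_cases hbig : (l:ℕ)+1 ≤ (p:ℕ) ∨ (l:ℕ)+1 ≤ (q:ℕ)
  · rw [hw p q (by rcases hbig with h1|h1; exacts [Or.inl h1, Or.inr h1])]
    rw [if_neg (by rintro ⟨h1, rfl⟩; omega),
      if_neg (by rintro ⟨h1, rfl⟩; omega),
      if_neg (by omega),
      if_neg (by rintro ⟨h1, h2⟩; have e1 := congrArg Fin.val h1; have e2 := congrArg Fin.val h2; omega)]
    simp
  · push_neg at hbig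
    obtain ⟨hp2, hq2⟩ := hbig
    by_cases hpv : (p:ℕ) = (l:ℕ)
    · have hpe : p = l := Fin.ext hpv
      subst hpe
      by_cases hqv : (q:ℕ) = (p:ℕ)
      · have hqe : q = p := Fin.ext hqv
        subst hqe
        rw [T.diag_coord, if_neg (by omega), if_neg (by omega), if_neg (by omega),
          if_pos ⟨rfl, rfl⟩]
        simp
      · have hql : (q:ℕ) < (p:ℕ) := by omega
        rw [if_neg (by omega), if_pos ⟨hql, rfl⟩, if_neg (by omega),
          if_neg (by rintro ⟨-, h2⟩; exact hqv (congrArg Fin.val h2.symm)),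
          T.c_selfadj hsa q p]
        simp
    · have hpl2 : (p:ℕ) < (l:ℕ) := by omega
      have hql : q = l := by
        rcases h with h1 | h1
        · omega
        · exact Fin.ext (by omega)
      subst hql
      rw [if_pos ⟨hpl2, rfl⟩, if_neg (by omega), if_neg (by omega),
        if_neg (by rintro ⟨h1, -⟩; exact hpv (congrArg Fin.val h1.symm))]
      simp

end Schur

section Proj

/-- the projection keeping only columns `< m` -/
def projW (m : ℕ) (u : A) : A := ∑ i : Fin r, ∑ j : Fin r, if (j:ℕ) < m then T.c u i j else 0

lemma c_projW (m : ℕ) (u : A) (p q : Fin r) :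
    T.c (T.projW m u) p q = if (q:ℕ) < m then T.c u p q else 0 := by
  rw [projW, T.c_finsum]
  have key : ∀ i : Fin r, T.c (∑ j : Fin r, if (j:ℕ) < m then T.c u i j else 0) p q
      = if i = p then (if (q:ℕ) < m then T.c u p q else 0) else 0 := by
    intro i
    rw [T.c_finsum]
    have inner : ∀ j : Fin r, T.c (if (j:ℕ) < m then T.c u i j else 0) p q
        = if j = q then (if (i = p ∧ (q:ℕ) < m) then T.c u p q else 0) else 0 := by
      intro j
      by_cases hj : (j:ℕ) < m
      · rw [if_pos hj, T.c_c]
        by_cases hiq : i = p ∧ j = q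
        · obtain ⟨rfl, rfl⟩ := hiq
          rw [if_pos ⟨rfl, rfl⟩, if_pos rfl, if_pos ⟨rfl, hj⟩]
        · by_cases hjq : j = q
          · subst hjq
            rw [if_pos rfl, if_neg (by tauto), if_neg (by tauto)]
          · rw [if_neg (by tauto), if_neg hjq]
      · rw [if_neg hj, T.c_zero]
        by_cases hjq : j = q
        · subst hjq
          rw [if_pos rfl, if_neg (by tauto)]
        · rw [if_neg hjq]
    rw [Finset.sum_congr rfl (fun j _ => inner j)]
    rw [Finset.sum_ite_eq' Finset.univ q (fun _ => if (i = p ∧ (q:ℕ) < m) then T.c u p q else 0)]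
    simp only [Finset.mem_univ, if_true]
    by_cases hip : i = p
    · subst hip; simp
    · rw [if_neg hip, if_neg (by tauto)]
  rw [Finset.sum_congr rfl (fun i _ => key i)]
  rw [Finset.sum_ite_eq' Finset.univ p (fun _ => if (q:ℕ) < m then T.c u p q else 0)]
  simp

lemma ut_projW (m : ℕ) {u : A} (hu : T.UpperTriangular u) :
    T.UpperTriangular (T.projW m u) := by
  intro p q h
  rw [T.c_projW]
  by_cases hq : (q:ℕ) < m
  · rw [if_pos hq, hu p q h]
  · rw [if_neg hq]

lemma win_projW (m : ℕ) {u : A} (hu : T.UpperTriangular u) : T.Win m (T.projW m u) := by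
  intro p q h
  rw [T.c_projW]
  by_cases hq : (q:ℕ) < m
  · rw [if_pos hq]
    rcases h with h1 | h1
    · exact hu p q (Fin.lt_def.mpr (by omega))
    · omega
  · rw [if_neg hq]

lemma mul_projW_left (m : ℕ) {x : A} (hx : T.Win m x) (u : A) :
    T.mul u x = T.mul (T.projW m u) x := by
  apply T.c_ext; intro p q
  rw [T.c_mul, T.c_mul]
  apply Finset.sum_congr rfl; intro k _
  rw [T.c_projW]
  by_cases hk : (k:ℕ) < m
  · rw [if_pos hk]
  · rw [if_neg hk, hx k q (Or.inl (by omega)), T.mul_zero', T.mul_zero']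

lemma quad_win_proj {m : ℕ} {x u : A} (hx : T.Win m x) (hu : T.UpperTriangular u) :
    T.quad x u = T.quad x (T.projW m u) := by
  unfold quad
  rw [← T.mul_projW_left m hx u]
  congr 1
  have hz : T.Win m (T.mul u x) := by
    intro p q h
    rcases h with h1 | h1
    · rw [T.mul_projW_left m hx u, T.c_mul]
      apply Finset.sum_eq_zero; intro k _
      rw [T.c_projW]
      by_cases hk : (k:ℕ) < m
      · rw [if_pos hk, hu p k (Fin.lt_def.mpr (by omega)), T.zero_mul']
      · rw [if_neg hk, T.zero_mul']
    · rw [T.c_mul]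
      apply Finset.sum_eq_zero; intro k _
      rw [hx k q (Or.inr h1), T.mul_zero']
  have hd : T.mul (T.mul u x) (T.conj (u - T.projW m u)) = 0 := by
    apply T.mul_eq_zero_sep _ _ (fun q => m ≤ (q:ℕ))
    · intro p q hq; exact hz p q (Or.inr hq)
    · intro q s hq
      rw [T.c_conj, T.c_sub, T.c_projW, if_pos (by omega), sub_self, map_zero]
  rw [map_sub T.conj] at hd
  rw [map_sub (T.mul (T.mul u x))] at hd
  exact sub_eq_zero.mp hd

lemma posW_of_win {m : ℕ} {x : A} (hw : T.Win m x) (hp : T.PosW m x) (m' : ℕ) :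
    T.PosW m' x :=
  ⟨hp.1, fun u hu _ => by
    rw [T.quad_win_proj hw hu]
    exact hp.2 _ (T.ut_projW m hu) (T.win_projW m hu)⟩

lemma quad_el (l : Fin r) (u : A) : T.quad (T.e l) u = T.nsq (T.mul u (T.e l)) := by
  unfold quad nsq
  congr 1
  have hcol : ∀ p q, ¬ q = l → T.c (T.mul u (T.e l)) p q = 0 := by
    intro p q hq
    rw [T.c_mul]
    apply Finset.sum_eq_zero; intro k _
    rw [T.c_other (T.e_mem l) (by rintro ⟨rfl, rfl⟩; exact hq rfl), T.mul_zero']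
  have hentry : ∀ s, T.c (T.mul u (T.e l)) s l = T.c u s l := by
    intro s
    rw [T.c_mul]
    rw [Finset.sum_eq_single l]
    · rw [T.c_self (T.e_mem l)]
      exact T.mul_e u l s
    · intro k _ hk
      rw [T.c_other (T.e_mem l) (by tauto), T.mul_zero']
    · intro h; exact absurd (Finset.mem_univ l) h
  have hd : T.mul (T.mul u (T.e l)) (T.conj (u - T.mul u (T.e l))) = 0 := by
    apply T.mul_eq_zero_sep _ _ (fun q => ¬ q = l)
    · intro p q hq; exact hcol p q hq
    · intro q s hq
      push_neg at hq; subst hq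
      rw [T.c_conj, T.c_sub, hentry, sub_self, map_zero]
  rw [map_sub T.conj] at hd
  rw [map_sub (T.mul (T.mul u (T.e l)))] at hd
  exact sub_eq_zero.mp hd

end Proj

end TAlgebra
namespace TAlgebra

variable {A : Type*} [AddCommGroup A] [Module ℝ A] {r : ℕ} (T : TAlgebra A r)

section Pivot

lemma win_of_mem {x : A} {i j : Fin r} (hx : x ∈ T.S i j) {m : ℕ}
    (hi : (i:ℕ) < m) (hj : (j:ℕ) < m) : T.Win m x := by
  intro k q h
  apply T.c_other hx
  rintro ⟨rfl, rfl⟩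
  rcases h with h1 | h1 <;> omega

lemma rho_nonneg_of_posW {m : ℕ} {x : A} (hp : T.PosW m x) {l : Fin r} (hl : (l:ℕ) < m) :
    0 ≤ T.ρ l x := by
  have := hp.2 (T.e l) (T.ut_e l) (T.win_e hl)
  rwa [T.quad_e] at this

/-- if the pivot vanishes, the whole column (and row) vanishes -/
lemma win_of_pivot_zero {l : Fin r} {x : A} (hsa : T.conj x = x) (hw : T.Win ((l:ℕ)+1) x)
    (hp : T.PosW ((l:ℕ)+1) x) (hβ : T.ρ l x = 0) : T.Win (l:ℕ) x := by
  have hdiag : T.c x l l = 0 := by rw [T.diag_coord, hβ, zero_smul]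
  have hcol : ∀ i : Fin r, (i:ℕ) < (l:ℕ) → T.c x i l = 0 := by
    intro i hi
    have hil : i ≤ l := Fin.le_def.mpr (le_of_lt hi)
    have hccmem := T.c_mem x i l
    -- (1) quad x (c x i l) = 0
    have hQcc : T.quad x (T.c x i l) = 0 := by
      unfold quad
      have hz : T.mul (T.mul (T.c x i l) x) (T.conj (T.c x i l)) = 0 := by
        apply T.mul_eq_zero_sep _ _ (fun q => q = l)
        · intro p q hq
          rw [hq, T.c_mul]
          apply Finset.sum_eq_zero; intro k _
          rw [T.c_c]
          by_cases hk : i = p ∧ l = k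
          · obtain ⟨rfl, rfl⟩ := hk
            rw [if_pos ⟨rfl, rfl⟩, hdiag, T.mul_zero']
          · rw [if_neg hk, T.zero_mul']
        · intro q s hq
          exact T.c_other (T.conj_grade i l _ hccmem) (by rintro ⟨rfl, -⟩; exact hq rfl)
      rw [hz, T.tr_zero]
    -- (2) first cross term
    have hcross1 : T.tr (T.mul (T.mul (T.e i) x) (T.conj (T.c x i l))) = T.nsq (T.c x i l) := by
      have hexp : T.mul (T.mul (T.e i) x) (T.conj (T.c x i l))
          = ∑ k, T.mul (T.c x i k) (T.conj (T.c x i l)) := by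
        rw [T.e_mul_left]
        simp only [map_sum, LinearMap.coe_sum, Finset.sum_apply]
      rw [hexp, Finset.sum_eq_single l]
      · rfl
      · intro k _ hk
        exact T.grade_mul_zero i k l i hk _ (T.c_mem x i k) _ (T.conj_grade i l _ hccmem)
      · intro h; exact absurd (Finset.mem_univ l) h
    -- (3) second cross term
    have hcross2 : T.tr (T.mul (T.mul (T.c x i l) x) (T.conj (T.e i))) = T.nsq (T.c x i l) := by
      rw [T.conj_e, T.tr_mul_e]
      have hcc : T.c (T.mul (T.c x i l) x) i i = T.mul (T.c x i l) (T.conj (T.c x i l)) := by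
        rw [T.c_mul]
        rw [Finset.sum_eq_single l]
        · rw [T.c_c, if_pos ⟨rfl, rfl⟩, T.c_selfadj hsa i l]
        · intro k _ hk
          rw [T.c_c, if_neg (by tauto), T.zero_mul']
        · intro h; exact absurd (Finset.mem_univ l) h
      calc T.ρ i (T.mul (T.c x i l) x)
          = T.ρ i (T.c (T.mul (T.c x i l) x) i i) := (T.ρ_c_diag _ i).symm
        _ = T.ρ i (T.mul (T.c x i l) (T.conj (T.c x i l))) := by rw [hcc]
        _ = T.nsq (T.c x i l) := by
            rw [nsq, T.tr_graded_diag (T.grade_mul i l i _ hccmem _ (T.conj_grade i l _ hccmem))]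
    -- quadratic in τ
    have hval : ∀ τ : ℝ, 0 ≤ T.ρ i x + 2*τ*(T.nsq (T.c x i l)) := by
      intro τ
      have hUT : T.UpperTriangular (T.e i + τ • T.c x i l) :=
        T.ut_add (T.ut_e i) (T.ut_smul τ (T.ut_of_mem hccmem hil))
      have hWin : T.Win ((l:ℕ)+1) (T.e i + τ • T.c x i l) :=
        T.win_add (T.win_e (by omega)) (T.win_smul τ (T.win_of_mem hccmem (by omega) (by omega)))
      have h0 := hp.2 _ hUT hWin
      rw [T.quad_bilin] at h0
      rw [T.quad_e] at h0
      have e1 : T.quad x (τ • T.c x i l) = 0 := by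
        rw [T.quad_smul_u, hQcc, mul_zero]
      have e2 : T.tr (T.mul (T.mul (T.e i) x) (T.conj (τ • T.c x i l)))
          = τ * T.nsq (T.c x i l) := by
        rw [map_smul, map_smul, T.tr_smul, hcross1]
      have e3 : T.tr (T.mul (T.mul (τ • T.c x i l) x) (T.conj (T.e i)))
          = τ * T.nsq (T.c x i l) := by
        have : T.mul (T.mul (τ • T.c x i l) x) (T.conj (T.e i))
            = τ • T.mul (T.mul (T.c x i l) x) (T.conj (T.e i)) := by
          simp only [map_smul, LinearMap.smul_apply]
        rw [this, T.tr_smul, hcross2]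
      rw [e1, e2, e3] at h0
      linarith
    -- conclude
    have hzero : T.nsq (T.c x i l) = 0 := by
      by_contra hne
      have hpos : 0 < T.nsq (T.c x i l) :=
        lt_of_le_of_ne (T.nsq_nonneg _) (Ne.symm hne)
      have h2 := hval (-(T.ρ i x + 1)/(2*T.nsq (T.c x i l)))
      have h3 : 2 * (-(T.ρ i x + 1)/(2*T.nsq (T.c x i l))) * T.nsq (T.c x i l)
          = -(T.ρ i x + 1) := by
        field_simp
      rw [h3] at h2
      linarith
    exact T.nsq_eq_zero hzero
  -- now conclude the window property
  intro p q h
  by_cases hbig : (l:ℕ)+1 ≤ (p:ℕ) ∨ (l:ℕ)+1 ≤ (q:ℕ)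
  · exact hw p q hbig
  · push_neg at hbig
    obtain ⟨hp2, hq2⟩ := hbig
    by_cases hpv : (p:ℕ) = (l:ℕ)
    · have hpe : p = l := Fin.ext hpv
      subst hpe
      by_cases hqv : (q:ℕ) = (p:ℕ)
      · have : q = p := Fin.ext hqv
        subst this
        exact hdiag
      · have hql : (q:ℕ) < (p:ℕ) := by omega
        rw [T.c_selfadj hsa q p, hcol q hql, map_zero]
    · have hpl : (p:ℕ) < (l:ℕ) := by omega
      have hql : q = l := by
        rcases h with h1 | h1
        · omega
        · exact Fin.ext (by omega)
      subst hql
      exact hcol p hpl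

lemma quad_schur_eq {l : Fin r} {x : A} (hsa : T.conj x = x) (hw : T.Win ((l:ℕ)+1) x)
    (hβ : T.ρ l x ≠ 0) {u : A} (hu : T.UpperTriangular u) (hwu : T.Win (l:ℕ) u) :
    T.quad (T.schur l x) u
      = T.quad x (T.mul u (T.eSum - (T.ρ l x)⁻¹ • T.colP l x)) := by
  have hg : T.UpperTriangular (T.eSum - (T.ρ l x)⁻¹ • T.colP l x) :=
    T.ut_sub T.ut_eSum (T.ut_smul _ (T.ut_colP l x))
  have hkey := T.key_conj hsa hw hβ
  have hschur : T.schur l x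
      = T.mul (T.mul (T.eSum - (T.ρ l x)⁻¹ • T.colP l x) x)
          (T.conj (T.eSum - (T.ρ l x)⁻¹ • T.colP l x)) - T.ρ l x • T.e l := by
    rw [hkey]; abel
  rw [hschur, T.quad_sub_x, T.quad_smul_x, T.quad_cong hu hg, T.quad_el]
  have hcol0 : T.mul u (T.e l) = 0 := by
    rw [T.mul_e_right]
    apply Finset.sum_eq_zero; intro k _
    exact hwu k l (Or.inr (le_refl _))
  rw [hcol0, T.nsq_zero, mul_zero, sub_zero]

lemma schur_posW {l : Fin r} {x : A} (hsa : T.conj x = x) (hw : T.Win ((l:ℕ)+1) x)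
    (hp : T.PosW ((l:ℕ)+1) x) (hβ : T.ρ l x ≠ 0) : T.PosW (l:ℕ) (T.schur l x) := by
  refine ⟨T.schur_selfadj hsa, fun u hu hwu => ?_⟩
  rw [T.quad_schur_eq hsa hw hβ hu hwu]
  have hg : T.UpperTriangular (T.eSum - (T.ρ l x)⁻¹ • T.colP l x) :=
    T.ut_sub T.ut_eSum (T.ut_smul _ (T.ut_colP l x))
  have hmul_eq : T.mul u (T.eSum - (T.ρ l x)⁻¹ • T.colP l x)
      = u - (T.ρ l x)⁻¹ • T.mul u (T.colP l x) := by
    rw [map_sub, map_smul, T.mul_eSum]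
  have hwin : T.Win ((l:ℕ)+1) (T.mul u (T.eSum - (T.ρ l x)⁻¹ • T.colP l x)) := by
    rw [hmul_eq]
    exact T.win_sub (T.win_mono (by omega) hwu)
      (T.win_smul _ (T.win_mul (T.win_mono (by omega) hwu) (T.win_colP l x)))
  exact hp.2 _ (T.ut_mul hu hg) hwin

lemma posW_char {l : Fin r} {x : A} (hsa : T.conj x = x) (hw : T.Win ((l:ℕ)+1) x)
    (hβpos : 0 < T.ρ l x) (hps : T.PosW (l:ℕ) (T.schur l x)) : T.PosW ((l:ℕ)+1) x := by
  refine ⟨hsa, fun u hu hwu => ?_⟩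
  have hβ := ne_of_gt hβpos
  have hb := T.ut_colP l x
  have hg : T.UpperTriangular (T.eSum - (T.ρ l x)⁻¹ • T.colP l x) :=
    T.ut_sub T.ut_eSum (T.ut_smul _ hb)
  have hginv : T.UpperTriangular (T.eSum + (T.ρ l x)⁻¹ • T.colP l x) :=
    T.ut_add T.ut_eSum (T.ut_smul _ hb)
  have hgg : T.mul (T.eSum + (T.ρ l x)⁻¹ • T.colP l x)
      (T.eSum - (T.ρ l x)⁻¹ • T.colP l x) = T.eSum := by
    rw [map_sub (T.mul (T.eSum + (T.ρ l x)⁻¹ • T.colP l x)),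
      map_smul (T.mul (T.eSum + (T.ρ l x)⁻¹ • T.colP l x))]
    simp only [map_add, map_smul, LinearMap.add_apply, LinearMap.smul_apply]
    rw [T.mul_eSum, T.mul_eSum, T.eSum_mul, T.mul_colP_colP]
    simp only [smul_zero, add_zero]
    abel
  have hxid : x = T.mul (T.mul (T.eSum + (T.ρ l x)⁻¹ • T.colP l x)
      (T.mul (T.mul (T.eSum - (T.ρ l x)⁻¹ • T.colP l x) x)
        (T.conj (T.eSum - (T.ρ l x)⁻¹ • T.colP l x))))
      (T.conj (T.eSum + (T.ρ l x)⁻¹ • T.colP l x)) := by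
    rw [T.mul_cong hginv hg x, hgg, T.eSum_mul, T.conj_eSum, T.mul_eSum]
  conv_rhs => rw [hxid]
  rw [show T.mul (T.mul (T.eSum - (T.ρ l x)⁻¹ • T.colP l x) x)
      (T.conj (T.eSum - (T.ρ l x)⁻¹ • T.colP l x)) = T.schur l x + T.ρ l x • T.e l from
    T.key_conj hsa hw hβ]
  rw [T.quad_cong hu hginv, T.quad_add_x, T.quad_smul_x, T.quad_el]
  have h1 : 0 ≤ T.quad (T.schur l x) (T.mul u (T.eSum + (T.ρ l x)⁻¹ • T.colP l x)) := by
    rw [T.quad_win_proj (T.schur_win hsa hw) (T.ut_mul hu hginv)]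
    exact hps.2 _ (T.ut_projW _ (T.ut_mul hu hginv)) (T.win_projW _ (T.ut_mul hu hginv))
  have h2 : 0 ≤ T.nsq (T.mul (T.mul u (T.eSum + (T.ρ l x)⁻¹ • T.colP l x)) (T.e l)) :=
    T.nsq_nonneg _
  have h3 : 0 ≤ T.ρ l x * T.nsq (T.mul (T.mul u (T.eSum + (T.ρ l x)⁻¹ • T.colP l x)) (T.e l)) :=
    mul_nonneg (le_of_lt hβpos) h2
  linarith

end Pivot

end TAlgebra
namespace TAlgebra

variable {A : Type*} [AddCommGroup A] [Module ℝ A] {r : ℕ} (T : TAlgebra A r)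

section Chol

theorem cholW : ∀ m : ℕ, m ≤ r → ∀ x : A, T.Win m x → T.PosW m x →
    ∃ t, T.UpperTriangular t ∧ (∀ i, 0 ≤ T.ρ i t) ∧ T.Win m t ∧ x = T.mul t (T.conj t) := by
  intro m
  induction m with
  | zero =>
    intro _ x hw _
    refine ⟨0, T.ut_zero, fun i => le_of_eq (T.ρ_zero i).symm, T.win_zero 0, ?_⟩
    have hx0 : x = 0 := T.c_ext fun i j => by
      rw [hw i j (Or.inl (Nat.zero_le _)), T.c_zero]
    rw [hx0]
    simp only [map_zero, LinearMap.zero_apply]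
  | succ m ih =>
    intro hm x hw hp
    have hmr : m < r := by omega
    let l : Fin r := ⟨m, hmr⟩
    have hlval : (l : ℕ) = m := rfl
    have hβnn : 0 ≤ T.ρ l x := T.rho_nonneg_of_posW hp (Nat.lt_succ_self m)
    rcases eq_or_lt_of_le hβnn with hβ0 | hβpos
    · -- zero pivot
      have hw' : T.Win m x := T.win_of_pivot_zero (l := l) hp.1 hw hp hβ0.symm
      have hp' : T.PosW m x := T.posW_anti (Nat.le_succ m) hp
      obtain ⟨t, h1, h2, h3, h4⟩ := ih (by omega) x hw' hp'
      exact ⟨t, h1, h2, T.win_mono (Nat.le_succ m) h3, h4⟩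
    · have hβ : T.ρ l x ≠ 0 := ne_of_gt hβpos
      have hws : T.Win m (T.schur l x) := T.schur_win (l := l) hp.1 hw
      have hps : T.PosW m (T.schur l x) := T.schur_posW (l := l) hp.1 hw hp hβ
      obtain ⟨t'', h1, h2, h3, h4⟩ := ih (by omega) _ hws hps
      set s := Real.sqrt (T.ρ l x) with hsdef
      have hs2 : s * s = T.ρ l x := Real.mul_self_sqrt hβnn
      set u₀ := s • T.e l + t'' with hu₀def
      have hu₀ : T.UpperTriangular u₀ := T.ut_add (T.ut_smul _ (T.ut_e l)) h1
      have hz1 : T.mul (T.e l) (T.conj t'') = 0 := by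
        apply T.mul_eq_zero_sep _ _ (fun q => (q:ℕ) < (l:ℕ))
        · intro p q hq
          exact T.c_other (T.e_mem l) (by rintro ⟨rfl, rfl⟩; omega)
        · intro q s' hq
          rw [T.c_conj, h3 s' q (Or.inr (by omega)), map_zero]
      have hz2 : T.mul t'' (T.e l) = 0 := by
        apply T.mul_eq_zero_sep _ _ (fun q => q = l)
        · intro p q hq
          rw [hq]
          exact h3 p l (Or.inr (by omega))
        · intro q s' hq
          exact T.c_other (T.e_mem l) (by rintro ⟨rfl, -⟩; exact hq rfl)
      have hy : T.mul u₀ (T.conj u₀) = T.schur l x + T.ρ l x • T.e l := by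
        rw [hu₀def]
        rw [show T.conj (s • T.e l + t'') = s • T.e l + T.conj t'' from by
          rw [map_add, map_smul, T.conj_e]]
        simp only [map_add, map_smul, LinearMap.add_apply, LinearMap.smul_apply]
        rw [T.e_idem, hz1, hz2, ← h4]
        rw [add_zero, smul_zero, zero_add, smul_smul, hs2]
        abel
      -- conjugation back
      have hb := T.ut_colP l x
      have hg : T.UpperTriangular (T.eSum - (T.ρ l x)⁻¹ • T.colP l x) :=
        T.ut_sub T.ut_eSum (T.ut_smul _ hb)
      have hginv : T.UpperTriangular (T.eSum + (T.ρ l x)⁻¹ • T.colP l x) :=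
        T.ut_add T.ut_eSum (T.ut_smul _ hb)
      have hgg : T.mul (T.eSum + (T.ρ l x)⁻¹ • T.colP l x)
          (T.eSum - (T.ρ l x)⁻¹ • T.colP l x) = T.eSum := by
        rw [map_sub (T.mul (T.eSum + (T.ρ l x)⁻¹ • T.colP l x)),
          map_smul (T.mul (T.eSum + (T.ρ l x)⁻¹ • T.colP l x))]
        simp only [map_add, map_smul, LinearMap.add_apply, LinearMap.smul_apply]
        rw [T.mul_eSum, T.mul_eSum, T.eSum_mul, T.mul_colP_colP]
        simp only [smul_zero, add_zero]
        abel
      have hxid : x = T.mul (T.mul (T.eSum + (T.ρ l x)⁻¹ • T.colP l x)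
          (T.mul (T.mul (T.eSum - (T.ρ l x)⁻¹ • T.colP l x) x)
            (T.conj (T.eSum - (T.ρ l x)⁻¹ • T.colP l x))))
          (T.conj (T.eSum + (T.ρ l x)⁻¹ • T.colP l x)) := by
        rw [T.mul_cong hginv hg x, hgg, T.eSum_mul, T.conj_eSum, T.mul_eSum]
      have hxt : x = T.mul (T.mul (T.eSum + (T.ρ l x)⁻¹ • T.colP l x) u₀)
          (T.conj (T.mul (T.eSum + (T.ρ l x)⁻¹ • T.colP l x) u₀)) := by
        conv_lhs => rw [hxid]
        rw [T.key_conj (l := l) hp.1 hw hβ, ← hy]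
        exact T.mul_sq hginv hu₀
      -- explicit form of t
      have hz3 : T.mul (T.colP l x) t'' = 0 := by
        apply T.mul_eq_zero_sep _ _ (fun q => ¬ (q = l))
        · intro p q hq
          rw [T.c_colP]
          exact if_neg (by tauto)
        · intro q s' hq
          rw [not_not.mp hq]
          exact h3 l s' (Or.inl (by omega))
      have ht_eq : T.mul (T.eSum + (T.ρ l x)⁻¹ • T.colP l x) u₀
          = u₀ + ((T.ρ l x)⁻¹ * s) • T.colP l x := by
        simp only [map_add, map_smul, LinearMap.add_apply, LinearMap.smul_apply]
        rw [T.eSum_mul]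
        rw [hu₀def]
        rw [map_add, map_smul]
        rw [T.mul_colP_e, hz3]
        rw [add_zero, smul_smul]
      refine ⟨T.mul (T.eSum + (T.ρ l x)⁻¹ • T.colP l x) u₀, T.ut_mul hginv hu₀, ?_, ?_, hxt⟩
      · -- nonnegative diagonal
        intro i
        have hct : T.c (T.mul (T.eSum + (T.ρ l x)⁻¹ • T.colP l x) u₀) i i
            = s • T.c (T.e l) i i + T.c t'' i i := by
          rw [ht_eq, T.c_add, T.c_smul, T.c_colP,
            if_neg (by rintro ⟨h5, rfl⟩; omega), smul_zero, add_zero,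
            hu₀def, T.c_add, T.c_smul]
        by_cases hil : i = l
        · subst hil
          have hc2 : T.c t'' l l = 0 := h3 l l (Or.inl (by omega))
          rw [T.c_self (T.e_mem l), hc2, add_zero] at hct
          have hval2 : T.ρ l (T.mul (T.eSum + (T.ρ l x)⁻¹ • T.colP l x) u₀) = s := by
            apply T.smul_e_cancel (i := l)
            rw [← T.diag_coord]
            exact hct
          rw [hval2]
          exact Real.sqrt_nonneg _
        · have hc1 : T.c (T.e l) i i = 0 :=
            T.c_other (T.e_mem l) (by rintro ⟨rfl, -⟩; exact hil rfl)
          rw [hc1, smul_zero, zero_add] at hct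
          have : T.ρ i (T.mul (T.eSum + (T.ρ l x)⁻¹ • T.colP l x) u₀) = T.ρ i t'' := by
            apply T.smul_e_cancel (i := i)
            rw [← T.diag_coord, ← T.diag_coord]
            exact hct
          rw [this]
          exact h2 i
      · -- window
        rw [ht_eq]
        refine T.win_add (T.win_add ?_ ?_) ?_
        · exact T.win_smul _ (T.win_e (Nat.lt_succ_self m))
        · exact T.win_mono (Nat.le_succ m) h3
        · exact T.win_smul _ (T.win_colP l x)

/-- membership in the closed cone is equivalent to (windowed) positivity -/
theorem mem_clCone_iff (x : A) : x ∈ T.clCone ↔ T.PosW r x := by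
  constructor
  · rintro ⟨t, ⟨hut, hρ⟩, rfl⟩
    exact T.posW_sq r hut
  · intro hp
    obtain ⟨t, h1, h2, _, h4⟩ := T.cholW r (le_refl r) x (T.win_top x) hp
    exact ⟨t, ⟨h1, h2⟩, h4⟩

lemma clCone_add {x y : A} (hx : x ∈ T.clCone) (hy : y ∈ T.clCone) : x + y ∈ T.clCone := by
  rw [T.mem_clCone_iff] at *
  exact T.posW_add hx hy

lemma clCone_smul {x : A} {s : ℝ} (hs : 0 ≤ s) (hx : x ∈ T.clCone) : s • x ∈ T.clCone := by
  rw [T.mem_clCone_iff] at *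
  exact T.posW_smul hs hx

lemma clCone_zero : (0 : A) ∈ T.clCone := by
  rw [T.mem_clCone_iff]
  exact T.posW_zero r

lemma clCone_convex : Convex ℝ T.clCone := by
  intro x hx y hy a b ha hb _
  exact T.clCone_add (T.clCone_smul ha hx) (T.clCone_smul hb hy)

lemma rho_nonneg_clCone {x : A} (hx : x ∈ T.clCone) (i : Fin r) : 0 ≤ T.ρ i x := by
  rw [T.mem_clCone_iff] at hx
  exact T.rho_nonneg_of_posW hx i.isLt

lemma e_mem_clCone (i : Fin r) : T.e i ∈ T.clCone := by
  refine ⟨T.e i, ⟨T.ut_e i, fun k => ?_⟩, by rw [T.conj_e, T.e_idem]⟩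
  by_cases h : k = i
  · subst h; rw [T.ρ_e]; norm_num
  · rw [T.ρ_graded_ne (T.e_mem i) (by rintro ⟨rfl, -⟩; exact h rfl)]

end Chol

end TAlgebra
namespace TAlgebra

variable {A : Type*} [AddCommGroup A] [Module ℝ A] {r : ℕ} (T : TAlgebra A r)

section Faces1

/-- principal faces -/
def Fc (k : ℕ) : Set A := {x | x ∈ T.clCone ∧ ∀ i : Fin r, k ≤ (i:ℕ) → T.ρ i x = 0}

lemma isFace_Fc (k : ℕ) : IsFace T.clCone (T.Fc k) := by
  refine ⟨⟨0, T.clCone_zero, fun i _ => T.ρ_zero i⟩, ?_, ?_, fun x hx => hx.1, ?_⟩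
  · -- convex
    intro x hx y hy a b ha hb hab
    refine ⟨T.clCone_convex hx.1 hy.1 ha hb hab, fun i hi => ?_⟩
    rw [T.ρ_add, T.ρ_smul, T.ρ_smul, hx.2 i hi, hy.2 i hi, mul_zero, mul_zero, add_zero]
  · -- cone
    intro x hx c hc
    exact ⟨T.clCone_smul hc hx.1, fun i hi => by rw [T.ρ_smul, hx.2 i hi, mul_zero]⟩
  · -- face property
    intro x hx y hy hxy
    have key : ∀ i : Fin r, k ≤ (i:ℕ) → T.ρ i x = 0 ∧ T.ρ i y = 0 := by
      intro i hi
      have h1 := hxy.2 i hi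
      rw [T.ρ_add] at h1
      have h2 := T.rho_nonneg_clCone hx i
      have h3 := T.rho_nonneg_clCone hy i
      constructor <;> linarith
    exact ⟨⟨hx, fun i hi => (key i hi).1⟩, ⟨hy, fun i hi => (key i hi).2⟩⟩

lemma Fc_mono {k k' : ℕ} (h : k ≤ k') : T.Fc k ⊆ T.Fc k' :=
  fun x hx => ⟨hx.1, fun i hi => hx.2 i (le_trans h hi)⟩

lemma Fc_strict {k k' : ℕ} (h : k < k') (hk' : k' ≤ r) : ¬ (T.Fc k' ⊆ T.Fc k) := by
  intro hsub
  have hkr : k < r := by omega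
  have hmem : T.e ⟨k, hkr⟩ ∈ T.Fc k' := by
    refine ⟨T.e_mem_clCone _, fun i hi => ?_⟩
    apply T.ρ_graded_ne (T.e_mem ⟨k, hkr⟩)
    rintro ⟨rfl, -⟩
    simp only [Fin.val_mk] at hi
    omega
  have := (hsub hmem).2 ⟨k, hkr⟩ (le_refl k)
  rw [T.ρ_e] at this
  norm_num at this

theorem part1 : ∃ F : Fin (r+1) → Set A, StrictMono F ∧ ∀ i, IsFace T.clCone (F i) := by
  refine ⟨fun k => T.Fc (k:ℕ), ?_, fun k => T.isFace_Fc _⟩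
  intro i j hij
  refine ⟨T.Fc_mono (le_of_lt hij), ?_⟩
  exact T.Fc_strict hij (by omega)

end Faces1

end TAlgebra
namespace TAlgebra

variable {A : Type*} [AddCommGroup A] [Module ℝ A] {r : ℕ} (T : TAlgebra A r)

section GramIdent

lemma mul_conj_expand (p q : A) : T.mul (p + q) (T.conj (p + q))
    = T.mul p (T.conj p) + T.mul p (T.conj q) + T.mul q (T.conj p) + T.mul q (T.conj q) := by
  simp only [map_add, LinearMap.add_apply]
  abel

lemma mul_conj_expand_smul (a b : ℝ) (p q : A) : T.mul (a • p - b • q) (T.conj (a • p - b • q))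
    = (a*a) • T.mul p (T.conj p) - (a*b) • T.mul p (T.conj q)
      - (a*b) • T.mul q (T.conj p) + (b*b) • T.mul q (T.conj q) := by
  simp only [map_sub, map_smul, LinearMap.sub_apply, LinearMap.smul_apply, smul_sub, smul_smul]
  rw [mul_comm b a]
  abel

lemma gram_identity (p q : A) {a b : ℝ} (ha : a ≠ 0) (hb : b ≠ 0) (hab : a + b ≠ 0) :
    (a+b)⁻¹ • T.mul (p+q) (T.conj (p+q))
      = a⁻¹ • T.mul p (T.conj p) + b⁻¹ • T.mul q (T.conj q)
        - ((a+b)*a*b)⁻¹ • T.mul (b•p - a•q) (T.conj (b•p - a•q)) := by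
  rw [T.mul_conj_expand, T.mul_conj_expand_smul]
  match_scalars <;> field_simp <;> ring

lemma gram_identity2 (p q : A) {a b ε : ℝ} (ha : a ≠ 0) (hb : b ≠ 0) (hγ : a - ε*b ≠ 0) :
    (a-ε*b)⁻¹ • T.mul (p - ε•q) (T.conj (p - ε•q))
      = a⁻¹ • T.mul p (T.conj p) - ε • b⁻¹ • T.mul q (T.conj q)
        + (ε * (((a-ε*b)*a*b)⁻¹)) • T.mul (b•p - a•q) (T.conj (b•p - a•q)) := by
  have hexp : T.mul (p - ε•q) (T.conj (p - ε•q))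
      = T.mul p (T.conj p) - ε • T.mul p (T.conj q)
        - ε • T.mul q (T.conj p) + (ε*ε) • T.mul q (T.conj q) := by
    have := T.mul_conj_expand_smul 1 ε p q
    simpa using this
  rw [hexp, T.mul_conj_expand_smul]
  match_scalars <;> field_simp <;> ring

end GramIdent

section SchurAdd

lemma colP_add (l : Fin r) (x y : A) : T.colP l (x + y) = T.colP l x + T.colP l y := by
  rw [colP, colP, colP, ← Finset.sum_add_distrib]
  apply Finset.sum_congr rfl; intro i _
  rw [T.c_add]
  by_cases h : (i:ℕ) < (l:ℕ)
  · simp [h]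
  · simp [h]

lemma colP_sub (l : Fin r) (x y : A) : T.colP l (x - y) = T.colP l x - T.colP l y := by
  rw [colP, colP, colP, ← Finset.sum_sub_distrib]
  apply Finset.sum_congr rfl; intro i _
  rw [T.c_sub]
  by_cases h : (i:ℕ) < (l:ℕ)
  · simp [h]
  · simp [h]

lemma colP_smul (l : Fin r) (s : ℝ) (x : A) : T.colP l (s • x) = s • T.colP l x := by
  rw [colP, colP, Finset.smul_sum]
  apply Finset.sum_congr rfl; intro i _
  rw [T.c_smul]
  by_cases h : (i:ℕ) < (l:ℕ)
  · simp [h]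
  · simp [h]

lemma rho_zero_of_win {l : Fin r} {y : A} (hwy : T.Win (l:ℕ) y) : T.ρ l y = 0 := by
  apply T.smul_e_cancel (i := l)
  rw [← T.diag_coord, hwy l l (Or.inl (le_refl _)), zero_smul]

lemma colP_eq_zero {l : Fin r} {y : A} (hwy : T.Win (l:ℕ) y) : T.colP l y = 0 := by
  rw [colP]
  apply Finset.sum_eq_zero; intro i _
  rw [hwy i l (Or.inr (le_refl _))]
  simp

/-- adding an element supported strictly inside the window commutes with `schur` -/
lemma schur_add_win {l : Fin r} (x : A) {z : A} (hwz : T.Win (l:ℕ) z) :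
    T.schur l (x + z) = T.schur l x + z := by
  rw [schur, schur, T.colP_add, T.colP_eq_zero hwz, T.ρ_add, T.rho_zero_of_win hwz]
  simp only [add_zero]
  abel

/-- superadditivity identity for the Schur complement -/
lemma schur_add_same {l : Fin r} {x y : A} (hx : T.ρ l x ≠ 0) (hy : T.ρ l y ≠ 0)
    (hxy : T.ρ l x + T.ρ l y ≠ 0) :
    T.schur l (x + y) = T.schur l x + (T.schur l y
      + ((T.ρ l x + T.ρ l y) * T.ρ l x * T.ρ l y)⁻¹
        • T.mul (T.ρ l y • T.colP l x - T.ρ l x • T.colP l y)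
            (T.conj (T.ρ l y • T.colP l x - T.ρ l x • T.colP l y))) := by
  have hgram := T.gram_identity (T.colP l x) (T.colP l y) hx hy hxy
  rw [schur, schur, schur, T.colP_add, T.ρ_add, hgram, map_add T.conj, add_smul]
  abel

end SchurAdd

end TAlgebra
namespace TAlgebra

variable {A : Type*} [AddCommGroup A] [Module ℝ A] {r : ℕ} (T : TAlgebra A r)

section SuppDef

lemma schur_sub_eps {l : Fin r} {x y : A} {ε : ℝ} (hx : T.ρ l x ≠ 0) (hy : T.ρ l y ≠ 0)
    (hγ : T.ρ l x - ε * T.ρ l y ≠ 0) :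
    T.schur l (x - ε • y) = T.schur l x - ε • T.schur l y
      - (ε * (((T.ρ l x - ε * T.ρ l y) * T.ρ l x * T.ρ l y)⁻¹))
        • T.mul (T.ρ l y • T.colP l x - T.ρ l x • T.colP l y)
            (T.conj (T.ρ l y • T.colP l x - T.ρ l x • T.colP l y)) := by
  have hgram := T.gram_identity2 (T.colP l x) (T.colP l y) hx hy hγ
  have hρ : T.ρ l (x - ε • y) = T.ρ l x - ε * T.ρ l y := by rw [T.ρ_sub, T.ρ_smul]
  have hcol : T.colP l (x - ε • y) = T.colP l x - ε • T.colP l y := by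
    rw [T.colP_sub, T.colP_smul]
  rw [schur, schur, schur, hρ, hcol, hgram, map_sub T.conj, map_smul T.conj]
  module

lemma win_col_sq {l : Fin r} {c : A}
    (hc : ∀ (p q : Fin r), ¬((p:ℕ) < (l:ℕ) ∧ q = l) → T.c c p q = 0) :
    T.Win (l:ℕ) (T.mul c (T.conj c)) := by
  intro p q h
  rw [T.c_mul]
  apply Finset.sum_eq_zero; intro k _
  rcases h with h1 | h1
  · rw [hc p k (by rintro ⟨h2, -⟩; omega), T.zero_mul']
  · rw [T.c_conj, hc q k (by rintro ⟨h2, -⟩; omega), map_zero, T.mul_zero']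

lemma c0_cond (l : Fin r) (a b : ℝ) (x y : A) :
    ∀ (p q : Fin r), ¬((p:ℕ) < (l:ℕ) ∧ q = l) → T.c (a • T.colP l x - b • T.colP l y) p q = 0 := by
  intro p q h
  rw [T.c_sub, T.c_smul, T.c_smul, T.c_colP, T.c_colP, if_neg h, if_neg h]
  simp

lemma ut_c0 (l : Fin r) (a b : ℝ) (x y : A) :
    T.UpperTriangular (a • T.colP l x - b • T.colP l y) :=
  T.ut_sub (T.ut_smul _ (T.ut_colP l x)) (T.ut_smul _ (T.ut_colP l y))

/-- the pivot support of an element -/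
noncomputable def supp : ℕ → A → Finset (Fin r)
  | 0, _ => ∅
  | (m+1), x =>
    if h : m < r then
      (if 0 < T.ρ ⟨m, h⟩ x then insert ⟨m, h⟩ (supp m (T.schur ⟨m, h⟩ x)) else supp m x)
    else supp m x

lemma supp_succ {m : ℕ} (h : m < r) (x : A) :
    T.supp (m+1) x = if 0 < T.ρ ⟨m, h⟩ x
      then insert ⟨m, h⟩ (T.supp m (T.schur ⟨m, h⟩ x)) else T.supp m x := by
  rw [supp, dif_pos h]

lemma supp_lt (m : ℕ) : ∀ (x : A) (i : Fin r), i ∈ T.supp m x → (i:ℕ) < m := by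
  induction m with
  | zero => intro x i hi; simp [supp] at hi
  | succ m ih =>
    intro x i hi
    by_cases h : m < r
    · rw [T.supp_succ h] at hi
      by_cases hq : 0 < T.ρ ⟨m, h⟩ x
      · rw [if_pos hq] at hi
        rcases Finset.mem_insert.mp hi with h1 | h1
        · rw [h1]; exact Nat.lt_succ_self m
        · have := ih _ _ h1; omega
      · rw [if_neg hq] at hi
        have := ih _ _ hi; omega
    · rw [supp, dif_neg h] at hi
      have := ih _ _ hi; omega

end SuppDef

end TAlgebra
namespace TAlgebra

variable {A : Type*} [AddCommGroup A] [Module ℝ A] {r : ℕ} (T : TAlgebra A r)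

section Claims

theorem suppA (m : ℕ) : m ≤ r → ∀ x y : A, T.Win m x → T.PosW m x → T.Win m y → T.PosW m y →
    T.supp m x ⊆ T.supp m (x + y) := by
  induction m with
  | zero => intro _ x y _ _ _ _; simp [supp]
  | succ m ih =>
    intro hm x y hwx hpx hwy hpy
    have hmr : m < r := by omega
    have hβx : 0 ≤ T.ρ ⟨m, hmr⟩ x := T.rho_nonneg_of_posW hpx (Nat.lt_succ_self m)
    have hβy : 0 ≤ T.ρ ⟨m, hmr⟩ y := T.rho_nonneg_of_posW hpy (Nat.lt_succ_self m)
    rw [T.supp_succ hmr x, T.supp_succ hmr (x+y)]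
    by_cases hx0 : 0 < T.ρ ⟨m, hmr⟩ x
    · have hxy0 : 0 < T.ρ ⟨m, hmr⟩ (x+y) := by rw [T.ρ_add]; linarith
      rw [if_pos hx0, if_pos hxy0]
      apply Finset.insert_subset_insert
      by_cases hy0 : 0 < T.ρ ⟨m, hmr⟩ y
      · rw [T.schur_add_same (ne_of_gt hx0) (ne_of_gt hy0) (ne_of_gt (by linarith))]
        refine ih (by omega) _ _ (T.schur_win (l := ⟨m, hmr⟩) hpx.1 hwx)
          (T.schur_posW (l := ⟨m, hmr⟩) hpx.1 hwx hpx (ne_of_gt hx0)) ?_ ?_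
        · exact T.win_add (T.schur_win (l := ⟨m, hmr⟩) hpy.1 hwy)
            (T.win_smul _ (T.win_col_sq (T.c0_cond ⟨m, hmr⟩ _ _ x y)))
        · refine T.posW_add (T.schur_posW (l := ⟨m, hmr⟩) hpy.1 hwy hpy (ne_of_gt hy0)) ?_
          refine T.posW_smul ?_ (T.posW_sq m (T.ut_c0 ⟨m, hmr⟩ _ _ x y))
          positivity
      · have hy0' : T.ρ ⟨m, hmr⟩ y = 0 := le_antisymm (not_lt.mp hy0) hβy
        have hwy' : T.Win m y := T.win_of_pivot_zero (l := ⟨m, hmr⟩) hpy.1 hwy hpy hy0'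
        rw [T.schur_add_win (l := ⟨m, hmr⟩) x hwy']
        exact ih (by omega) _ _ (T.schur_win (l := ⟨m, hmr⟩) hpx.1 hwx)
          (T.schur_posW (l := ⟨m, hmr⟩) hpx.1 hwx hpx (ne_of_gt hx0)) hwy' (T.posW_anti (Nat.le_succ m) hpy)
    · have hx0' : T.ρ ⟨m, hmr⟩ x = 0 := le_antisymm (not_lt.mp hx0) hβx
      have hwx' : T.Win m x := T.win_of_pivot_zero (l := ⟨m, hmr⟩) hpx.1 hwx hpx hx0'
      rw [if_neg hx0]
      by_cases hy0 : 0 < T.ρ ⟨m, hmr⟩ y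
      · have hxy0 : 0 < T.ρ ⟨m, hmr⟩ (x+y) := by rw [T.ρ_add, hx0']; linarith
        rw [if_pos hxy0]
        have heq2 : T.schur ⟨m, hmr⟩ (x+y) = T.schur ⟨m, hmr⟩ y + x := by
          rw [add_comm x y]; exact T.schur_add_win (l := ⟨m, hmr⟩) y hwx'
        rw [heq2]
        refine subset_trans ?_ (Finset.subset_insert _ _)
        have hsub := ih (by omega) x (T.schur ⟨m, hmr⟩ y) hwx' (T.posW_anti (Nat.le_succ m) hpx)
          (T.schur_win (l := ⟨m, hmr⟩) hpy.1 hwy) (T.schur_posW (l := ⟨m, hmr⟩) hpy.1 hwy hpy (ne_of_gt hy0))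
        rw [add_comm (T.schur ⟨m, hmr⟩ y) x]
        exact hsub
      · have hy0' : T.ρ ⟨m, hmr⟩ y = 0 := le_antisymm (not_lt.mp hy0) hβy
        have hwy' : T.Win m y := T.win_of_pivot_zero (l := ⟨m, hmr⟩) hpy.1 hwy hpy hy0'
        have hxy0 : ¬ 0 < T.ρ ⟨m, hmr⟩ (x+y) := by rw [T.ρ_add, hx0', hy0']; norm_num
        rw [if_neg hxy0]
        exact ih (by omega) x y hwx' (T.posW_anti (Nat.le_succ m) hpx) hwy'
          (T.posW_anti (Nat.le_succ m) hpy)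

theorem suppB (m : ℕ) : m ≤ r → ∀ x y : A, T.Win m x → T.PosW m x → T.Win m y → T.PosW m y →
    T.supp m (x + y) = T.supp m x → ∃ ε : ℝ, 0 < ε ∧ T.PosW m (x - ε • y) := by
  induction m with
  | zero =>
    intro _ x y _ hpx _ hpy _
    refine ⟨1, one_pos, ⟨by rw [map_sub, map_smul, hpx.1, hpy.1], fun u hu hw => ?_⟩⟩
    have hu0 : u = 0 := T.c_ext fun i j => by
      rw [hw i j (Or.inl (Nat.zero_le _)), T.c_zero]
    rw [hu0]
    unfold quad
    rw [T.zero_mul', T.zero_mul', T.tr_zero]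
  | succ m ih =>
    intro hm x y hwx hpx hwy hpy heq
    have hmr : m < r := by omega
    have hβx : 0 ≤ T.ρ ⟨m, hmr⟩ x := T.rho_nonneg_of_posW hpx (Nat.lt_succ_self m)
    have hβy : 0 ≤ T.ρ ⟨m, hmr⟩ y := T.rho_nonneg_of_posW hpy (Nat.lt_succ_self m)
    have hl_notin : ∀ z : A, (⟨m, hmr⟩ : Fin r) ∉ T.supp m z := fun z hz =>
      absurd (T.supp_lt m z _ hz) (Nat.lt_irrefl m)
    rw [T.supp_succ hmr (x+y), T.supp_succ hmr x] at heq
    by_cases hx0 : 0 < T.ρ ⟨m, hmr⟩ x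
    · have hxy0 : 0 < T.ρ ⟨m, hmr⟩ (x+y) := by rw [T.ρ_add]; linarith
      rw [if_pos hxy0, if_pos hx0] at heq
      have hSeq : T.supp m (T.schur ⟨m, hmr⟩ (x+y)) = T.supp m (T.schur ⟨m, hmr⟩ x) := by
        have h1 := congrArg (fun s => Finset.erase s (⟨m, hmr⟩ : Fin r)) heq
        simpa [Finset.erase_insert (hl_notin _)] using h1
      by_cases hy0 : 0 < T.ρ ⟨m, hmr⟩ y
      · -- main case
        rw [T.schur_add_same (ne_of_gt hx0) (ne_of_gt hy0) (ne_of_gt (by linarith))] at hSeq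
        have hYw : T.Win m (T.schur ⟨m, hmr⟩ y
            + ((T.ρ ⟨m, hmr⟩ x + T.ρ ⟨m, hmr⟩ y) * T.ρ ⟨m, hmr⟩ x * T.ρ ⟨m, hmr⟩ y)⁻¹
              • T.mul (T.ρ ⟨m, hmr⟩ y • T.colP ⟨m, hmr⟩ x - T.ρ ⟨m, hmr⟩ x • T.colP ⟨m, hmr⟩ y)
                (T.conj (T.ρ ⟨m, hmr⟩ y • T.colP ⟨m, hmr⟩ x - T.ρ ⟨m, hmr⟩ x • T.colP ⟨m, hmr⟩ y))) :=
          T.win_add (T.schur_win (l := ⟨m, hmr⟩) hpy.1 hwy)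
            (T.win_smul _ (T.win_col_sq (T.c0_cond ⟨m, hmr⟩ _ _ x y)))
        have hYp : T.PosW m (T.schur ⟨m, hmr⟩ y
            + ((T.ρ ⟨m, hmr⟩ x + T.ρ ⟨m, hmr⟩ y) * T.ρ ⟨m, hmr⟩ x * T.ρ ⟨m, hmr⟩ y)⁻¹
              • T.mul (T.ρ ⟨m, hmr⟩ y • T.colP ⟨m, hmr⟩ x - T.ρ ⟨m, hmr⟩ x • T.colP ⟨m, hmr⟩ y)
                (T.conj (T.ρ ⟨m, hmr⟩ y • T.colP ⟨m, hmr⟩ x - T.ρ ⟨m, hmr⟩ x • T.colP ⟨m, hmr⟩ y))) :=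
          T.posW_add (T.schur_posW (l := ⟨m, hmr⟩) hpy.1 hwy hpy (ne_of_gt hy0))
            (T.posW_smul (by positivity) (T.posW_sq m (T.ut_c0 ⟨m, hmr⟩ _ _ x y)))
        obtain ⟨δ, hδ, hPδ⟩ := ih (by omega) _ _ (T.schur_win (l := ⟨m, hmr⟩) hpx.1 hwx)
          (T.schur_posW (l := ⟨m, hmr⟩) hpx.1 hwx hpx (ne_of_gt hx0)) hYw hYp hSeq
        set a := T.ρ ⟨m, hmr⟩ x with hadef
        set b := T.ρ ⟨m, hmr⟩ y with hbdef
        refine ⟨min δ (min (a/(2*b)) (δ*a/(2*(a+b)))), by positivity, ?_⟩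
        set ε := min δ (min (a/(2*b)) (δ*a/(2*(a+b)))) with hεdef
        have hεpos : 0 < ε := by rw [hεdef]; positivity
        have hε1 : ε ≤ δ := min_le_left _ _
        have hε2 : ε ≤ a/(2*b) := le_trans (min_le_right _ _) (min_le_left _ _)
        have hε3 : ε ≤ δ*a/(2*(a+b)) := le_trans (min_le_right _ _) (min_le_right _ _)
        have hεb : ε * b ≤ a/2 := by
          have h6 := mul_le_mul_of_nonneg_right hε2 (le_of_lt hy0)
          have h7 : a/(2*b)*b = a/2 := by field_simp
          linarith [h7 ▸ h6]
        have hγpos : 0 < a - ε*b := by linarith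
        have hεab : ε * (2*(a+b)) ≤ δ*a := (le_div_iff₀ (by positivity)).mp hε3
        have h5 : ε * (a+b) ≤ δ * (a - ε*b) := by nlinarith
        have hd1 : (0:ℝ) < (a-ε*b)*a*b := by positivity
        have hd2 : (0:ℝ) < (a+b)*a*b := by positivity
        have hlam : ε * (((a-ε*b)*a*b)⁻¹) ≤ δ * (((a+b)*a*b)⁻¹) := by
          rw [← div_eq_mul_inv, ← div_eq_mul_inv, div_le_div_iff₀ hd1 hd2]
          nlinarith [mul_le_mul_of_nonneg_right h5 (le_of_lt (mul_pos hx0 hy0))]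
        have hPs : T.PosW m (T.schur ⟨m, hmr⟩ (x - ε • y)) := by
          rw [T.schur_sub_eps (ne_of_gt hx0) (ne_of_gt hy0) (ne_of_gt hγpos)]
          have hdecomp : T.schur ⟨m, hmr⟩ x - ε • T.schur ⟨m, hmr⟩ y
              - (ε * (((a-ε*b)*a*b)⁻¹))
                • T.mul (b • T.colP ⟨m, hmr⟩ x - a • T.colP ⟨m, hmr⟩ y)
                  (T.conj (b • T.colP ⟨m, hmr⟩ x - a • T.colP ⟨m, hmr⟩ y))
              = (T.schur ⟨m, hmr⟩ x - δ • (T.schur ⟨m, hmr⟩ y + ((a+b)*a*b)⁻¹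
                  • T.mul (b • T.colP ⟨m, hmr⟩ x - a • T.colP ⟨m, hmr⟩ y)
                    (T.conj (b • T.colP ⟨m, hmr⟩ x - a • T.colP ⟨m, hmr⟩ y))))
                + (δ - ε) • T.schur ⟨m, hmr⟩ y
                + (δ * (((a+b)*a*b)⁻¹) - ε * (((a-ε*b)*a*b)⁻¹))
                  • T.mul (b • T.colP ⟨m, hmr⟩ x - a • T.colP ⟨m, hmr⟩ y)
                    (T.conj (b • T.colP ⟨m, hmr⟩ x - a • T.colP ⟨m, hmr⟩ y)) := by
            module
          rw [hdecomp]
          refine T.posW_add (T.posW_add hPδ ?_) ?_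
          · exact T.posW_smul (by linarith) (T.schur_posW (l := ⟨m, hmr⟩) hpy.1 hwy hpy (ne_of_gt hy0))
          · exact T.posW_smul (by linarith [hlam]) (T.posW_sq m (T.ut_c0 ⟨m, hmr⟩ _ _ x y))
        exact T.posW_char (l := ⟨m, hmr⟩)
          (by rw [map_sub, map_smul, hpx.1, hpy.1])
          (T.win_sub hwx (T.win_smul _ hwy))
          (by rw [T.ρ_sub, T.ρ_smul, ← hadef, ← hbdef]; linarith) hPs
      · -- b = 0 case
        have hy0' : T.ρ ⟨m, hmr⟩ y = 0 := le_antisymm (not_lt.mp hy0) hβy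
        have hwy' : T.Win m y := T.win_of_pivot_zero (l := ⟨m, hmr⟩) hpy.1 hwy hpy hy0'
        rw [T.schur_add_win (l := ⟨m, hmr⟩) x hwy'] at hSeq
        obtain ⟨δ, hδ, hPδ⟩ := ih (by omega) _ _ (T.schur_win (l := ⟨m, hmr⟩) hpx.1 hwx)
          (T.schur_posW (l := ⟨m, hmr⟩) hpx.1 hwx hpx (ne_of_gt hx0)) hwy'
          (T.posW_anti (Nat.le_succ m) hpy) hSeq
        refine ⟨δ, hδ, ?_⟩
        refine T.posW_char (l := ⟨m, hmr⟩)
          (by rw [map_sub, map_smul, hpx.1, hpy.1])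
          (T.win_sub hwx (T.win_smul _ hwy))
          (by rw [T.ρ_sub, T.ρ_smul, hy0', mul_zero, sub_zero]; exact hx0) ?_
        have hsub_eq : x - δ • y = x + (-δ) • y := by module
        rw [hsub_eq, T.schur_add_win (l := ⟨m, hmr⟩) x (T.win_smul _ hwy')]
        rw [show T.schur ⟨m, hmr⟩ x + (-δ) • y = T.schur ⟨m, hmr⟩ x - δ • y from by module]
        exact hPδ
    · have hx0' : T.ρ ⟨m, hmr⟩ x = 0 := le_antisymm (not_lt.mp hx0) hβx
      have hwx' : T.Win m x := T.win_of_pivot_zero (l := ⟨m, hmr⟩) hpx.1 hwx hpx hx0'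
      rw [if_neg hx0] at heq
      have hy0' : T.ρ ⟨m, hmr⟩ y = 0 := by
        by_contra hyny
        have hy0 : 0 < T.ρ ⟨m, hmr⟩ y := lt_of_le_of_ne hβy (Ne.symm hyny)
        have hxy0 : 0 < T.ρ ⟨m, hmr⟩ (x+y) := by rw [T.ρ_add, hx0']; linarith
        rw [if_pos hxy0] at heq
        exact hl_notin x (heq ▸ Finset.mem_insert_self _ _)
      have hwy' : T.Win m y := T.win_of_pivot_zero (l := ⟨m, hmr⟩) hpy.1 hwy hpy hy0'
      have hxy0 : ¬ 0 < T.ρ ⟨m, hmr⟩ (x+y) := by rw [T.ρ_add, hx0', hy0']; norm_num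
      rw [if_neg hxy0] at heq
      obtain ⟨δ, hδ, hPδ⟩ := ih (by omega) x y hwx' (T.posW_anti (Nat.le_succ m) hpx) hwy'
        (T.posW_anti (Nat.le_succ m) hpy) heq
      exact ⟨δ, hδ, T.posW_of_win (T.win_sub hwx' (T.win_smul _ hwy')) hPδ (m+1)⟩

end Claims

end TAlgebra
namespace TAlgebra

variable {A : Type*} [AddCommGroup A] [Module ℝ A] {r : ℕ} (T : TAlgebra A r)

section Final

lemma face_add {G : Set A} (hG : IsFace T.clCone G) {a b : A} (ha : a ∈ G) (hb : b ∈ G) :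
    a + b ∈ G := by
  have hmid : (1/2 : ℝ) • a + (1/2 : ℝ) • b ∈ G :=
    hG.2.1 ha hb (by norm_num) (by norm_num) (by norm_num)
  have h2 := hG.2.2.1 _ hmid 2 (by norm_num)
  rw [show (2:ℝ) • ((1/2 : ℝ) • a + (1/2 : ℝ) • b) = a + b from by module] at h2
  exact h2

theorem part2 (ℓ : ℕ) (F : Fin ℓ → Set A) (hmono : StrictMono F)
    (hface : ∀ i, IsFace T.clCone (F i)) : ℓ ≤ r + 1 := by
  have hKsub : ∀ i, F i ⊆ T.clCone := fun i => (hface i).2.2.2.1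
  set card : A → ℕ := fun x => (T.supp r x).card with hcarddef
  set M : Fin ℓ → ℕ := fun i => sSup (card '' (F i)) with hMdef
  have hbdd : ∀ i, BddAbove (card '' (F i)) := by
    intro i
    refine ⟨r, ?_⟩
    rintro n ⟨x, -, rfl⟩
    calc card x ≤ (Finset.univ : Finset (Fin r)).card := Finset.card_le_univ _
      _ = r := by simp
  have hne : ∀ i, (card '' (F i)).Nonempty := fun i => ((hface i).1).image card
  have hMmem : ∀ i, M i ∈ card '' (F i) := fun i => Nat.sSup_mem (hne i) (hbdd i)
  have hMle : ∀ i, M i ≤ r := by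
    intro i
    apply csSup_le (hne i)
    rintro n ⟨x, -, rfl⟩
    calc card x ≤ (Finset.univ : Finset (Fin r)).card := Finset.card_le_univ _
      _ = r := by simp
  have hstrict : StrictMono M := by
    intro i j hij
    have hsub : F i ⊆ F j := le_of_lt (hmono hij)
    have hle : M i ≤ M j := csSup_le_csSup (hbdd j) (hne i) (Set.image_mono (f := card) hsub)
    rcases lt_or_eq_of_le hle with h | h
    · exact h
    · exfalso
      obtain ⟨x₀, hx₀F, hx₀c⟩ := hMmem i
      have hFji : F j ⊆ F i := by
        intro y hyF
        have hyK := hKsub j hyF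
        have hx₀K := hKsub i hx₀F
        have hx₀Fj : x₀ ∈ F j := hsub hx₀F
        have hsum : x₀ + y ∈ F j := T.face_add (hface j) hx₀Fj hyF
        have hsupsub : T.supp r x₀ ⊆ T.supp r (x₀ + y) :=
          T.suppA r (le_refl r) x₀ y (T.win_top _) ((T.mem_clCone_iff _).mp hx₀K)
            (T.win_top _) ((T.mem_clCone_iff _).mp hyK)
        have hcard_le : card (x₀ + y) ≤ M j := le_csSup (hbdd j) ⟨x₀ + y, hsum, rfl⟩
        have hseteq : T.supp r (x₀ + y) = T.supp r x₀ := by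
          refine (Finset.eq_of_subset_of_card_le hsupsub ?_).symm
          have : card x₀ = M i := hx₀c
          rw [hcarddef] at this hcard_le
          simp only at this hcard_le
          omega
        obtain ⟨ε, hε, hPos⟩ := T.suppB r (le_refl r) x₀ y (T.win_top _)
          ((T.mem_clCone_iff _).mp hx₀K) (T.win_top _) ((T.mem_clCone_iff _).mp hyK) hseteq
        have hzK : x₀ - ε • y ∈ T.clCone := (T.mem_clCone_iff _).mpr hPos
        have hεyK : ε • y ∈ T.clCone := T.clCone_smul (le_of_lt hε) hyK
        have hfacei := (hface i).2.2.2.2 _ hzK _ hεyK (by rw [sub_add_cancel]; exact hx₀F)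
        have hεyF : ε • y ∈ F i := hfacei.2
        have hyFi := (hface i).2.2.1 _ hεyF ε⁻¹ (by positivity)
        rwa [smul_smul, inv_mul_cancel₀ (ne_of_gt hε), one_smul] at hyFi
      exact (hmono hij).not_ge hFji
  by_cases hℓ : ℓ = 0
  · omega
  · have hginj : Function.Injective (fun i => (⟨M i, by have := hMle i; omega⟩ : Fin (r+1))) := by
      intro i j hij
      have hMeq : M i = M j := congrArg Fin.val hij
      exact hstrict.injective hMeq
    have := Fintype.card_le_of_injective _ hginj
    simpa using this

end Final

end TAlgebra

theorem stmt16' {A : Type*} [AddCommGroup A] [Module ℝ A] {r : ℕ} (T : TAlgebra A r) :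
    (∃ F : Fin (r + 1) → Set A, StrictMono F ∧ ∀ i, IsFace T.clCone (F i)) ∧
      ∀ (ℓ : ℕ) (F : Fin ℓ → Set A), StrictMono F →
        (∀ i, IsFace T.clCone (F i)) → ℓ ≤ r + 1 :=
  ⟨T.part1, fun ℓ F h1 h2 => T.part2 ℓ F h1 h2⟩

/-- Let `K` be the closed homogeneous cone of a T-algebra of rank `r`.  The length of the
longest chain of faces `F₁ ⊊ ⋯ ⊊ F_ℓ` of `K` equals `r + 1`: there is a strictly
increasing chain of `r + 1` faces, and no strictly increasing chain of faces is longer. -/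
theorem stmt16 {A : Type*} [AddCommGroup A] [Module ℝ A] {r : ℕ} (T : TAlgebra A r) :
    (∃ F : Fin (r + 1) → Set A, StrictMono F ∧ ∀ i, IsFace T.clCone (F i)) ∧
      ∀ (ℓ : ℕ) (F : Fin ℓ → Set A), StrictMono F →
        (∀ i, IsFace T.clCone (F i)) → ℓ ≤ r + 1 := by
  exact ⟨T.part1, fun ℓ F h1 h2 => T.part2 ℓ F h1 h2⟩
end

section
/- Let G be a chordal graph on {1,…,n} in a perfect elimination ordering. Then every matrix in S₊(G) can be written as l·lᵀ with l lower triangular, nonnegative diagonal, and sparsity pattern following G; that is, S₊(G) = { l·lᵀ : l ∈ LT₊(G) }. -/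
open Matrix Finset

namespace Stmt18Aux

lemma coeff_zero {b c : ℝ} (h : ∀ t : ℝ, 0 ≤ 2 * t * b + c) : b = 0 := by
  by_contra hb
  have h2 := h ((-c - 1) / (2 * b))
  have h3 : 2 * ((-c - 1) / (2 * b)) * b + c = -1 := by field_simp; ring
  rw [h3] at h2; linarith

lemma quad_nonneg {m : ℕ} {x : Matrix (Fin m) (Fin m) ℝ} (hx : x.PosSemidef)
    (v : Fin m → ℝ) : 0 ≤ ∑ i, v i * ∑ j, x i j * v j := by
  have := hx.dotProduct_mulVec_nonneg v
  simpa [dotProduct, mulVec, star_trivial] using this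

lemma quad_cons {m : ℕ} (x : Matrix (Fin (m+1)) (Fin (m+1)) ℝ)
    (hsym : ∀ i j, x j i = x i j) (t : ℝ) (w : Fin m → ℝ) :
    ∑ i, (Fin.cons t w : Fin (m+1) → ℝ) i *
        ∑ j, x i j * (Fin.cons t w : Fin (m+1) → ℝ) j =
      t ^ 2 * x 0 0 + 2 * t * (∑ j, x (Fin.succ j) 0 * w j) +
        ∑ i, w i * ∑ j, x (Fin.succ i) (Fin.succ j) * w j := by
  have h1 : ∀ j : Fin m, x 0 (Fin.succ j) = x (Fin.succ j) 0 := fun j => hsym _ _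
  simp only [Fin.sum_univ_succ, Fin.cons_zero, Fin.cons_succ, h1, mul_add]
  rw [Finset.sum_add_distrib]
  have e1 : ∑ i, w i * (x (Fin.succ i) 0 * t) = t * ∑ j, x (Fin.succ j) 0 * w j := by
    rw [Finset.mul_sum]; exact Finset.sum_congr rfl fun i _ => by ring
  rw [e1]; ring

lemma key : ∀ (m : ℕ) (G : SimpleGraph (Fin m))
    (_ : ∀ i j k : Fin m, i < j → j < k → G.Adj i j → G.Adj i k → G.Adj j k)
    (x : Matrix (Fin m) (Fin m) ℝ) (_ : x.PosSemidef)
    (_ : ∀ i j : Fin m, i ≠ j → ¬ G.Adj i j → x i j = 0),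
    ∃ l : Matrix (Fin m) (Fin m) ℝ,
      (∀ i j, i < j → l i j = 0) ∧ (∀ i, 0 ≤ l i i) ∧
      (∀ i j, i ≠ j → ¬ G.Adj i j → l i j = 0) ∧ x = l * lᵀ := by
  intro m
  induction m with
  | zero =>
    intro G hpeo x hx hpat
    exact ⟨0, fun i => i.elim0, fun i => i.elim0, fun i => i.elim0,
      by ext i; exact i.elim0⟩
  | succ m ih =>
    intro G hpeo x hx hpat
    have hsym : ∀ i j, x j i = x i j := fun i j => by
      simpa using hx.1.apply i j
    have ha0 : 0 ≤ x 0 0 := by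
      have := quad_nonneg hx (Pi.single 0 1)
      simpa [Pi.single_apply] using this
    -- induced graph on the tail
    set G' : SimpleGraph (Fin m) := G.comap Fin.succ with hG'
    have hG'adj : ∀ i j : Fin m, G'.Adj i j ↔ G.Adj (Fin.succ i) (Fin.succ j) :=
      fun i j => Iff.rfl
    have hpeo' : ∀ i j k : Fin m, i < j → j < k → G'.Adj i j → G'.Adj i k → G'.Adj j k := by
      intro i j k hij hjk h1 h2
      exact hpeo (Fin.succ i) (Fin.succ j) (Fin.succ k)
        (by simpa [Fin.succ_lt_succ_iff] using hij)
        (by simpa [Fin.succ_lt_succ_iff] using hjk) h1 h2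
    have hAdj0 : ∀ i : Fin m, x (Fin.succ i) 0 ≠ 0 → G.Adj (Fin.succ i) 0 := by
      intro i hne
      by_contra hadj
      exact hne (hpat _ _ (Fin.succ_ne_zero i) hadj)
    have cross_pat : ∀ i j : Fin m, i ≠ j → ¬ G.Adj (Fin.succ i) (Fin.succ j) →
        x (Fin.succ i) 0 * x (Fin.succ j) 0 = 0 := by
      intro i j hij hadj
      by_contra hc
      have hi := hAdj0 i (left_ne_zero_of_mul hc)
      have hj := hAdj0 j (right_ne_zero_of_mul hc)
      rcases lt_or_gt_of_ne hij with h | h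
      · exact hadj (hpeo 0 (Fin.succ i) (Fin.succ j) (Fin.succ_pos i)
          (by simpa [Fin.succ_lt_succ_iff] using h) hi.symm hj.symm)
      · exact hadj ((hpeo 0 (Fin.succ j) (Fin.succ i) (Fin.succ_pos j)
          (by simpa [Fin.succ_lt_succ_iff] using h) hj.symm hi.symm).symm)
    rcases eq_or_lt_of_le ha0 with ha | ha
    · -- x 0 0 = 0 : first row and column vanish
      replace ha : x 0 0 = 0 := ha.symm
      have hb : ∀ j : Fin m, x (Fin.succ j) 0 = 0 := by
        intro j
        apply coeff_zero (c := x (Fin.succ j) (Fin.succ j))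
        intro t
        have h := quad_nonneg hx (Fin.cons t (Pi.single j 1))
        rw [quad_cons x hsym] at h
        have e2 : ∑ k, x (Fin.succ k) 0 * (Pi.single j 1 : Fin m → ℝ) k = x (Fin.succ j) 0 := by
          simp [Pi.single_apply]
        have e3 : ∑ i, (Pi.single j 1 : Fin m → ℝ) i *
            ∑ k, x (Fin.succ i) (Fin.succ k) * (Pi.single j 1 : Fin m → ℝ) k
            = x (Fin.succ j) (Fin.succ j) := by
          simp [Pi.single_apply]
        rw [e2, e3, ha] at h
        linarith
      set C : Matrix (Fin m) (Fin m) ℝ := x.submatrix Fin.succ Fin.succ with hCdef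
      have hC : C.PosSemidef := hx.submatrix Fin.succ
      have hCpat : ∀ i j : Fin m, i ≠ j → ¬ G'.Adj i j → C i j = 0 := by
        intro i j hij hadj
        exact hpat _ _ (fun h => hij (Fin.succ_injective m h)) hadj
      obtain ⟨l', htri', hdiag', hpat', hfac'⟩ := ih G' hpeo' C hC hCpat
      refine ⟨Matrix.of (Fin.cons (fun _ => 0) (fun i => Fin.cons 0 (l' i))),
        ?_, ?_, ?_, ?_⟩
      · intro i j hij
        rcases Fin.eq_zero_or_eq_succ i with rfl | ⟨i, rfl⟩
        · simp
        · rcases Fin.eq_zero_or_eq_succ j with rfl | ⟨j, rfl⟩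
          · exact absurd hij (by simp [Fin.succ_ne_zero])
          · simpa using htri' i j (by simpa [Fin.succ_lt_succ_iff] using hij)
      · intro i
        rcases Fin.eq_zero_or_eq_succ i with rfl | ⟨i, rfl⟩
        · simp
        · simpa using hdiag' i
      · intro i j hij hadj
        rcases Fin.eq_zero_or_eq_succ i with rfl | ⟨i, rfl⟩
        · simp
        · rcases Fin.eq_zero_or_eq_succ j with rfl | ⟨j, rfl⟩
          · simp
          · simpa using hpat' i j (fun h => hij (by rw [h])) hadj
      · ext i j
        rw [mul_apply]
        rcases Fin.eq_zero_or_eq_succ i with rfl | ⟨i, rfl⟩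
        · rcases Fin.eq_zero_or_eq_succ j with rfl | ⟨j, rfl⟩
          · simpa using ha
          · rw [hsym]
            simpa using hb j
        · rcases Fin.eq_zero_or_eq_succ j with rfl | ⟨j, rfl⟩
          · simpa using hb i
          · have := congrFun (congrFun hfac' i) j
            rw [mul_apply] at this
            simp only [transpose_apply] at this
            simp [Fin.sum_univ_succ, hCdef, submatrix_apply] at this ⊢
            exact this
    · -- x 0 0 > 0 : Schur complement
      set a := x 0 0 with hadef
      set s := Real.sqrt a with hsdef
      have hs : 0 < s := Real.sqrt_pos.mpr ha
      have hss : s * s = a := Real.mul_self_sqrt ha.le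
      set C : Matrix (Fin m) (Fin m) ℝ :=
        Matrix.of (fun i j => x (Fin.succ i) (Fin.succ j) -
          x (Fin.succ i) 0 * x (Fin.succ j) 0 / a) with hCdef
      have hCapp : ∀ i j, C i j = x (Fin.succ i) (Fin.succ j) -
          x (Fin.succ i) 0 * x (Fin.succ j) 0 / a := fun i j => rfl
      have hCsym : ∀ i j, C j i = C i j := by
        intro i j
        rw [hCapp, hCapp, hsym]
        ring
      have hCexpand : ∀ w : Fin m → ℝ,
          ∑ i, w i * ∑ j, C i j * w j =
            (∑ i, w i * ∑ j, x (Fin.succ i) (Fin.succ j) * w j) -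
              (∑ j, x (Fin.succ j) 0 * w j) * (∑ j, x (Fin.succ j) 0 * w j) / a := by
        intro w
        have inner : ∀ i, ∑ j, C i j * w j =
            (∑ j, x (Fin.succ i) (Fin.succ j) * w j) -
              x (Fin.succ i) 0 * (∑ j, x (Fin.succ j) 0 * w j) / a := by
          intro i
          rw [Finset.mul_sum, Finset.sum_div, ← Finset.sum_sub_distrib]
          exact Finset.sum_congr rfl fun j _ => by rw [hCapp]; ring
        simp only [inner, mul_sub]
        rw [Finset.sum_sub_distrib]
        congr 1
        rw [Finset.sum_mul, Finset.sum_div]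
        exact Finset.sum_congr rfl fun i _ => by ring
      have hCpsd : C.PosSemidef := by
        refine posSemidef_iff_dotProduct_mulVec.mpr ⟨?_, ?_⟩
        · ext i j
          simp only [conjTranspose_apply, star_trivial]
          exact hCsym i j
        · intro w
          have hw : (star w ⬝ᵥ C *ᵥ w) = ∑ i, w i * ∑ j, C i j * w j := by
            simp [dotProduct, mulVec, star_trivial, Finset.mul_sum, mul_assoc]
          rw [hw, hCexpand w]
          set S1 := ∑ j, x (Fin.succ j) 0 * w j with hS1
          have h := quad_nonneg hx (Fin.cons (-(S1 / a)) w)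
          rw [quad_cons x hsym] at h
          have e : (-(S1 / a)) ^ 2 * x 0 0 + 2 * (-(S1 / a)) * S1 = -(S1 * S1 / a) := by
            rw [← hadef]; field_simp; ring
          rw [← hS1, e] at h
          linarith
      have hCpat : ∀ i j : Fin m, i ≠ j → ¬ G'.Adj i j → C i j = 0 := by
        intro i j hij hadj
        rw [hCapp, hpat _ _ (fun h => hij (Fin.succ_injective m h)) hadj,
          cross_pat i j hij hadj]
        simp
      obtain ⟨l', htri', hdiag', hpat', hfac'⟩ := ih G' hpeo' C hCpsd hCpat
      refine ⟨Matrix.of (Fin.cons (Fin.cons s (fun _ => 0))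
        (fun i => Fin.cons (x (Fin.succ i) 0 / s) (l' i))), ?_, ?_, ?_, ?_⟩
      · intro i j hij
        rcases Fin.eq_zero_or_eq_succ i with rfl | ⟨i, rfl⟩
        · rcases Fin.eq_zero_or_eq_succ j with rfl | ⟨j, rfl⟩
          · exact absurd hij (lt_irrefl _)
          · simp
        · rcases Fin.eq_zero_or_eq_succ j with rfl | ⟨j, rfl⟩
          · exact absurd hij (by simp [Fin.pos_iff_ne_zero])
          · simpa using htri' i j (by simpa [Fin.succ_lt_succ_iff] using hij)
      · intro i
        rcases Fin.eq_zero_or_eq_succ i with rfl | ⟨i, rfl⟩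
        · simpa using hs.le
        · simpa using hdiag' i
      · intro i j hij hadj
        rcases Fin.eq_zero_or_eq_succ i with rfl | ⟨i, rfl⟩
        · rcases Fin.eq_zero_or_eq_succ j with rfl | ⟨j, rfl⟩
          · exact absurd rfl hij
          · simp
        · rcases Fin.eq_zero_or_eq_succ j with rfl | ⟨j, rfl⟩
          · have : x (Fin.succ i) 0 = 0 := hpat _ _ (Fin.succ_ne_zero i) hadj
            simp [this]
          · simpa using hpat' i j (fun h => hij (by rw [h])) hadj
      · ext i j
        rw [mul_apply]
        rcases Fin.eq_zero_or_eq_succ i with rfl | ⟨i, rfl⟩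
        · rcases Fin.eq_zero_or_eq_succ j with rfl | ⟨j, rfl⟩
          · simpa [Fin.sum_univ_succ] using hss.symm
          · rw [hsym]
            simp only [Matrix.of_apply, transpose_apply, Fin.cons_zero, Fin.cons_succ, Fin.sum_univ_succ]
            have h5 : s * (x (Fin.succ j) 0 / s) = x (Fin.succ j) 0 := by
              field_simp
            simp [h5]
        · rcases Fin.eq_zero_or_eq_succ j with rfl | ⟨j, rfl⟩
          · simp only [Matrix.of_apply, transpose_apply, Fin.cons_zero, Fin.cons_succ, Fin.sum_univ_succ]
            have h5 : x (Fin.succ i) 0 / s * s = x (Fin.succ i) 0 :=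
              div_mul_cancel₀ _ hs.ne'
            simp [h5]
          · have hentry := congrFun (congrFun hfac' i) j
            rw [mul_apply] at hentry
            simp only [transpose_apply] at hentry
            rw [Fin.sum_univ_succ]
            simp only [Matrix.of_apply, transpose_apply, Fin.cons_succ, Fin.cons_zero]
            rw [← hentry, hCapp, div_mul_div_comm, hss]
            ring

end Stmt18Aux

/-- Let `G` be a chordal graph on `{1,…,n}` in a perfect elimination ordering.  Then
`S₊(G) = { l·lᵀ : l ∈ LT₊(G) }`: every PSD matrix with pattern `G` can be written as
`l·lᵀ` with `l` lower triangular, with nonnegative diagonal and sparsity pattern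
following `G`, and conversely. -/
theorem stmt18 {n : ℕ} (G : SimpleGraph (Fin n))
    (hpeo : ∀ i j k : Fin n, i < j → j < k → G.Adj i j → G.Adj i k → G.Adj j k) :
    {x : Matrix (Fin n) (Fin n) ℝ | x.PosSemidef ∧
        ∀ i j : Fin n, i ≠ j → ¬ G.Adj i j → x i j = 0} =
      {x : Matrix (Fin n) (Fin n) ℝ | ∃ l : Matrix (Fin n) (Fin n) ℝ,
        (∀ i j : Fin n, i < j → l i j = 0) ∧ (∀ i : Fin n, 0 ≤ l i i) ∧
        (∀ i j : Fin n, i ≠ j → ¬ G.Adj i j → l i j = 0) ∧ x = l * lᵀ} := by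
  ext x
  simp only [Set.mem_setOf_eq]
  constructor
  · rintro ⟨hx, hpat⟩
    exact Stmt18Aux.key n G hpeo x hx hpat
  · rintro ⟨l, htri, hdiag, hlpat, rfl⟩
    constructor
    · have h := Matrix.posSemidef_self_mul_conjTranspose l
      rwa [conjTranspose_eq_transpose_of_trivial] at h
    · intro i j hij hadj
      rw [mul_apply]
      apply Finset.sum_eq_zero
      intro k _
      simp only [transpose_apply]
      by_cases h1 : l i k = 0
      · rw [h1, zero_mul]
      by_cases h2 : l j k = 0
      · rw [h2, mul_zero]
      exfalso
      have hki : k ≤ i := le_of_not_gt fun h => h1 (htri i k h)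
      have hkj : k ≤ j := le_of_not_gt fun h => h2 (htri j k h)
      by_cases hk1 : k = i
      · subst hk1
        exact h2 (hlpat j k (Ne.symm hij) (fun h => hadj h.symm))
      by_cases hk2 : k = j
      · subst hk2
        exact h1 (hlpat i k hij hadj)
      have hAik : G.Adj i k := by
        by_contra h
        exact h1 (hlpat i k (Ne.symm hk1) h)
      have hAjk : G.Adj j k := by
        by_contra h
        exact h2 (hlpat j k (Ne.symm hk2) h)
      have hki' : k < i := lt_of_le_of_ne hki hk1
      have hkj' : k < j := lt_of_le_of_ne hkj hk2
      rcases lt_or_gt_of_ne hij with h | h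
      · exact hadj (hpeo k i j hki' h hAik.symm hAjk.symm)
      · exact hadj ((hpeo k j i hkj' h hAjk.symm hAik.symm).symm)
end
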